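/- arXiv:math/0108174 — 6 statements merged into one kernel-verified Lean document; each statement's English description precedes it below -/
import Mathlib

section
/- Let u0 : ℝ → ℝ be nondecreasing, left-continuous, with u0(y)/y² → 0 as y → -∞, and let u(x,t) be defined by the Hopf-Lax formula u(x,t) = inf_{y ≤ x} { u0(y) + (x-y)²/(4t) } for t > 0 and u(x,0) = u0(x). Then the semigroup property holds: for all 0 < s < t and x ∈ ℝ, u(x,t) = inf_{y ≤ x} { u(y,s) + (x-y)²/(4(t-s)) }. -/
open Set Filter MeasureTheory
open scoped NNReal ENNReal

/-- Hopf–Lax formula with flux f(ρ)=ρ², conjugate g(x)=x²/4: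
`u(x,t) = inf_{y ≤ x} { u0(y) + (x-y)²/(4t) }`, with `u(x,0)=u0(x)`. -/
noncomputable def hopfLax (u0 : ℝ → ℝ) (x t : ℝ) : ℝ :=
  if t = 0 then u0 x
  else sInf ((fun y => u0 y + (x - y) ^ 2 / (4 * t)) '' Iic x)

/-- Minimizer set `I(x;s,t)` in the semigroup Hopf–Lax formula.
For `s = 0` this is the set `I(x,t)` of Hopf–Lax minimizers. -/
noncomputable def minSet (u0 : ℝ → ℝ) (x s t : ℝ) : Set ℝ :=
  {y | y ≤ x ∧ hopfLax u0 x t = hopfLax u0 y s + (x - y) ^ 2 / (4 * (t - s))}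

/-- Minimal Hopf–Lax minimizer `y⁻(x;s,t)`. -/
noncomputable def yminus (u0 : ℝ → ℝ) (x s t : ℝ) : ℝ := sInf (minSet u0 x s t)

/-- Maximal Hopf–Lax minimizer `y⁺(x;s,t)`. -/
noncomputable def yplus (u0 : ℝ → ℝ) (x s t : ℝ) : ℝ := sSup (minSet u0 x s t)

/-- Minimal forward characteristic `w⁻(a;s,t) = inf{x : y±(x;s,t) ≥ a}`. -/
noncomputable def wminus (u0 : ℝ → ℝ) (a s t : ℝ) : ℝ :=
  sInf {x | a ≤ yminus u0 x s t}

/-- Maximal forward characteristic `w⁺(a;s,t) = sup{x : y±(x;s,t) ≤ a}`. -/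
noncomputable def wplus (u0 : ℝ → ℝ) (a s t : ℝ) : ℝ :=
  sSup {x | yplus u0 x s t ≤ a}

lemma quad_split_ineq (a b p q : ℝ) (hp : 0 < p) (hq : 0 < q) :
    (a + b) ^ 2 / (4 * (p + q)) ≤ a ^ 2 / (4 * p) + b ^ 2 / (4 * q) := by
  rw [div_add_div _ _ (by positivity) (by positivity),
    div_le_div_iff₀ (by positivity) (by positivity)]
  nlinarith [sq_nonneg (a * q - b * p), mul_pos hp hq]

lemma hopfLax_bddBelow_aux (u0 : ℝ → ℝ) (hmono : Monotone u0)
    (hgrowth : Tendsto (fun y => u0 y / y ^ 2) atBot (nhds 0))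
    (τ x : ℝ) (hτ : 0 < τ) :
    BddBelow ((fun y => u0 y + (x - y) ^ 2 / (4 * τ)) '' Iic x) := by
  have hε : (0:ℝ) < 1 / (8 * τ) := by positivity
  have h := Metric.tendsto_nhds.mp hgrowth _ hε
  rw [eventually_atBot] at h
  obtain ⟨R, hR⟩ := h
  set R' : ℝ := min R (-1) with hR'
  refine ⟨min (u0 R') (-(x ^ 2 / (4 * τ))), ?_⟩
  rintro b ⟨y, hy, rfl⟩
  by_cases hcase : y ≤ R'
  · have hy1 : y ≤ -1 := hcase.trans (min_le_right _ _)
    have hd := hR y (hcase.trans (min_le_left _ _))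
    rw [Real.dist_eq, sub_zero] at hd
    have hy2 : (0:ℝ) < y ^ 2 := by nlinarith
    have h3 : -(1 / (8 * τ)) * y ^ 2 < u0 y := by
      have := (abs_lt.mp hd).1
      calc -(1 / (8 * τ)) * y ^ 2 < (u0 y / y ^ 2) * y ^ 2 := by
            exact mul_lt_mul_of_pos_right this hy2
        _ = u0 y := by field_simp [(show y < 0 by linarith).ne]
    have key : -(x ^ 2 / (4 * τ)) ≤ -(1 / (8 * τ)) * y ^ 2 + (x - y) ^ 2 / (4 * τ) := by
      rw [← sub_nonneg]
      have heq : -(1 / (8 * τ)) * y ^ 2 + (x - y) ^ 2 / (4 * τ) - (-(x ^ 2 / (4 * τ)))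
          = (y - 2 * x) ^ 2 / (8 * τ) := by field_simp; ring
      rw [heq]; positivity
    have := min_le_right (u0 R') (-(x ^ 2 / (4 * τ)))
    simp only
    linarith
  · have h1 : u0 R' ≤ u0 y := hmono (le_of_not_ge hcase)
    have h2 : (0:ℝ) ≤ (x - y) ^ 2 / (4 * τ) := by positivity
    have := min_le_left (u0 R') (-(x ^ 2 / (4 * τ)))
    simp only
    linarith

/-- Semigroup property of the Hopf–Lax formula:
for 0 < s < t, u(x,t) = inf_{y ≤ x} { u(y,s) + (x-y)²/(4(t-s)) }. -/
theorem hopfLax_semigroup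
    (u0 : ℝ → ℝ) (hmono : Monotone u0)
    (hlc : ∀ y : ℝ, ContinuousWithinAt u0 (Iic y) y)
    (hgrowth : Tendsto (fun y => u0 y / y ^ 2) atBot (nhds 0))
    (s t x : ℝ) (hs : 0 < s) (hst : s < t) :
    hopfLax u0 x t
      = sInf ((fun y => hopfLax u0 y s + (x - y) ^ 2 / (4 * (t - s))) '' Iic x) := by
  have ht : 0 < t := hs.trans hst
  have hts : 0 < t - s := by linarith
  have hval : ∀ τ z : ℝ, τ ≠ 0 →
      hopfLax u0 z τ = sInf ((fun y => u0 y + (z - y) ^ 2 / (4 * τ)) '' Iic z) := by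
    intro τ z hτ; rw [hopfLax, if_neg hτ]
  have hbdd := hopfLax_bddBelow_aux u0 hmono hgrowth
  have key_le : ∀ τ z w : ℝ, 0 < τ → w ≤ z →
      hopfLax u0 z τ ≤ u0 w + (z - w) ^ 2 / (4 * τ) := by
    intro τ z w hτ hwz
    rw [hval τ z hτ.ne']
    exact csInf_le (hbdd τ z hτ) ⟨w, hwz, rfl⟩
  have key_ge : ∀ τ z m : ℝ, 0 < τ →
      (∀ w : ℝ, w ≤ z → m ≤ u0 w + (z - w) ^ 2 / (4 * τ)) → m ≤ hopfLax u0 z τ := by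
    intro τ z m hτ hm
    rw [hval τ z hτ.ne']
    refine le_csInf ⟨_, ⟨z, le_refl z, rfl⟩⟩ ?_
    rintro b ⟨w, hw, rfl⟩
    exact hm w hw
  -- pointwise bound: for all y ≤ x, u(x,t) ≤ u(y,s) + (x-y)²/(4(t-s))
  have hpt : ∀ y : ℝ, y ≤ x →
      hopfLax u0 x t ≤ hopfLax u0 y s + (x - y) ^ 2 / (4 * (t - s)) := by
    intro y hy
    have h1 : hopfLax u0 x t - (x - y) ^ 2 / (4 * (t - s)) ≤ hopfLax u0 y s := by
      refine key_ge s y _ hs ?_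
      intro w hw
      have h1 := key_le t x w ht (hw.trans hy)
      have h2 := quad_split_ineq (y - w) (x - y) s (t - s) hs hts
      have h3 : y - w + (x - y) = x - w := by ring
      have h4 : s + (t - s) = t := by ring
      rw [h3, h4] at h2
      linarith
    linarith
  apply le_antisymm
  · exact le_csInf ⟨_, ⟨x, le_refl x, rfl⟩⟩ (by rintro b ⟨y, hy, rfl⟩; exact hpt y hy)
  · have hbddR : BddBelow ((fun y => hopfLax u0 y s + (x - y) ^ 2 / (4 * (t - s))) '' Iic x) :=
      ⟨hopfLax u0 x t, by rintro b ⟨y, hy, rfl⟩; exact hpt y hy⟩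
    rw [hval t x ht.ne']
    refine le_csInf ⟨_, ⟨x, le_refl x, rfl⟩⟩ ?_
    rintro b ⟨z, hz, rfl⟩
    have hz' : z ≤ x := hz
    set y : ℝ := z + s * (x - z) / t with hy
    have hzy : z ≤ y := by
      rw [hy]
      have : 0 ≤ s * (x - z) / t := by
        apply div_nonneg (mul_nonneg hs.le (by linarith)) ht.le
      linarith
    have hyx : y ≤ x := by
      rw [hy]
      rw [← sub_nonneg]
      have : x - (z + s * (x - z) / t) = (x - z) * (t - s) / t := by field_simp; ring
      rw [this]
      exact div_nonneg (mul_nonneg (by linarith) hts.le) ht.le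
    have step1 : sInf ((fun y => hopfLax u0 y s + (x - y) ^ 2 / (4 * (t - s))) '' Iic x)
        ≤ hopfLax u0 y s + (x - y) ^ 2 / (4 * (t - s)) :=
      csInf_le hbddR ⟨y, hyx, rfl⟩
    have step2 : hopfLax u0 y s ≤ u0 z + (y - z) ^ 2 / (4 * s) := key_le s y z hs hzy
    have heq : (y - z) ^ 2 / (4 * s) + (x - y) ^ 2 / (4 * (t - s)) = (x - z) ^ 2 / (4 * t) := by
      rw [hy]
      field_simp
      ring
    linarith
end

section
/- With u given by the Hopf-Lax formula u(x,t) = inf_{y ≤ x} { u0(y) + (x-y)²/(4t) }, define for 0 ≤ s < t the minimizer set I(x;s,t) = { y ≤ x : u(x,t) = u(y,s) + (x-y)²/(4(t-s)) } and y⁻(x;s,t) = inf I(x;s,t), y⁺(x;s,t) = sup I(x;s,t). Then minimizers are monotone in x: if x₁ < x₂ then y⁺(x₁;s,t) ≤ y⁻(x₂;s,t). -/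
open Set Filter MeasureTheory
open scoped NNReal ENNReal

lemma hopfLax_zero (u0 : ℝ → ℝ) (x : ℝ) : hopfLax u0 x 0 = u0 x := by simp [hopfLax]

lemma hopfLax_of_ne (u0 : ℝ → ℝ) (x t : ℝ) (ht : t ≠ 0) :
    hopfLax u0 x t = sInf ((fun y => u0 y + (x - y) ^ 2 / (4 * t)) '' Iic x) := if_neg ht

lemma u0_lsc (u0 : ℝ → ℝ) (hmono : Monotone u0)
    (hlc : ∀ y : ℝ, ContinuousWithinAt u0 (Iic y) y) :
    LowerSemicontinuous u0 := by
  intro y c hc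
  have h1 : ∀ᶠ z in nhdsWithin y (Iic y), c < u0 z :=
    (hlc y).eventually (eventually_gt_nhds hc)
  have h2 : ∀ᶠ z in nhdsWithin y (Ioi y), c < u0 z :=
    eventually_nhdsWithin_of_forall (fun z hz => lt_of_lt_of_le hc (hmono hz.le))
  have : nhds y = nhdsWithin y (Iic y) ⊔ nhdsWithin y (Ioi y) :=
    (nhdsLE_sup_nhdsGT y).symm
  rw [this, eventually_sup]
  exact ⟨h1, h2⟩

lemma lsc_min {F : ℝ → ℝ} (hF : LowerSemicontinuous F) {K : Set ℝ}
    (hK : IsCompact K) (hne : K.Nonempty) : ∃ y ∈ K, ∀ z ∈ K, F y ≤ F z := by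
  haveI : Nonempty K := hne.to_subtype
  set t : K → Set ℝ := fun z => K ∩ F ⁻¹' Iic (F z) with ht
  have hdir : Directed (· ⊇ ·) t := by
    intro i j
    rcases le_total (F i) (F j) with h | h
    · exact ⟨i, subset_rfl, fun y hy => ⟨hy.1, le_trans hy.2 h⟩⟩
    · exact ⟨j, fun y hy => ⟨hy.1, le_trans hy.2 h⟩, subset_rfl⟩
  have hnon : ∀ i : K, (t i).Nonempty := fun i => ⟨i, i.2, mem_preimage.2 (mem_Iic.2 (le_refl _))⟩
  have hcl : ∀ i : K, IsClosed (t i) := fun i =>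
    hK.isClosed.inter (hF.isClosed_preimage _)
  have hcp : ∀ i : K, IsCompact (t i) := fun i =>
    hK.inter_right (hF.isClosed_preimage _)
  obtain ⟨y, hy⟩ := IsCompact.nonempty_iInter_of_directed_nonempty_isCompact_isClosed
    t hdir hnon hcp hcl
  simp only [mem_iInter] at hy
  refine ⟨y, (hy ⟨hne.some, hne.some_mem⟩).1, fun z hz => (hy ⟨z, hz⟩).2⟩

lemma exists_min (u0 : ℝ → ℝ) (hmono : Monotone u0)
    (hlc : ∀ y : ℝ, ContinuousWithinAt u0 (Iic y) y)
    (hgrowth : Tendsto (fun y => u0 y / y ^ 2) atBot (nhds 0))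
    (x t : ℝ) (ht : 0 < t) :
    ∃ y₀ ≤ x, ∀ z ≤ x, u0 y₀ + (x - y₀) ^ 2 / (4 * t) ≤ u0 z + (x - z) ^ 2 / (4 * t) := by
  set F : ℝ → ℝ := fun z => u0 z + (x - z) ^ 2 / (4 * t) with hFdef
  have hFlsc : LowerSemicontinuous F :=
    (u0_lsc u0 hmono hlc).add
      ((by fun_prop : Continuous fun z : ℝ => (x - z) ^ 2 / (4 * t)).lowerSemicontinuous)
  -- coercivity: eventually F x ≤ F z at -∞
  have hε : (0:ℝ) < 1 / (8 * t) := by positivity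
  have h1 : ∀ᶠ z in atBot, -(1 / (8 * t)) < u0 z / z ^ 2 :=
    hgrowth.eventually (eventually_gt_nhds (by linarith))
  have hFx : F x = u0 x := by simp [hFdef]
  set r : ℝ := max 0 (12 * x ^ 2 + 16 * t * u0 x) with hr
  have h2 : ∀ᶠ z in atBot, z ≤ -(Real.sqrt r + 1) := eventually_le_atBot _
  have hcoer : ∀ᶠ z in atBot, F x ≤ F z := by
    filter_upwards [h1, h2] with z hz1 hz2
    have hsq : (0:ℝ) ≤ Real.sqrt r := Real.sqrt_nonneg r
    have hzneg : z < 0 := lt_of_le_of_lt hz2 (by linarith)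
    have hz2pos : (0:ℝ) < z ^ 2 := by nlinarith
    have hrz : r ≤ z ^ 2 := by
      have h3 : (Real.sqrt r + 1) ^ 2 ≤ z ^ 2 := by nlinarith
      have h4 : r ≤ (Real.sqrt r + 1) ^ 2 := by
        have := Real.sq_sqrt (le_max_left 0 (12 * x ^ 2 + 16 * t * u0 x))
        nlinarith
      linarith
    have hrz' : 12 * x ^ 2 + 16 * t * u0 x ≤ z ^ 2 := le_trans (le_max_right _ _) hrz
    have hu : -(z ^ 2) / (8 * t) ≤ u0 z := by
      rw [lt_div_iff₀ hz2pos] at hz1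
      have he : -(1 / (8 * t)) * z ^ 2 = -(z ^ 2) / (8 * t) := by ring
      linarith
    rw [hFx]
    show u0 x ≤ u0 z + (x - z) ^ 2 / (4 * t)
    have key : u0 x * (8 * t) ≤ (u0 z + (x - z) ^ 2 / (4 * t)) * (8 * t) := by
      have e1 : (x - z) ^ 2 / (4 * t) * (8 * t) = 2 * (x - z) ^ 2 := by
        field_simp; ring
      have e2 : -(z ^ 2) / (8 * t) * (8 * t) = -(z ^ 2) := by field_simp
      have hC := mul_le_mul_of_nonneg_right hu (by positivity : (0:ℝ) ≤ 8 * t)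
      nlinarith [sq_nonneg (z - 4 * x)]
    exact le_of_mul_le_mul_right key (by positivity)
  obtain ⟨c, hc⟩ := eventually_atBot.1 hcoer
  set c' : ℝ := min c x with hc'
  obtain ⟨y₀, hy₀K, hy₀min⟩ := lsc_min hFlsc (isCompact_Icc (a := c') (b := x))
    ⟨x, min_le_right c x, le_refl x⟩
  refine ⟨y₀, hy₀K.2, fun z hz => ?_⟩
  rcases le_or_gt c' z with h | h
  · exact hy₀min z ⟨h, hz⟩
  · exact le_trans (hy₀min x ⟨min_le_right c x, le_refl x⟩)
      (hc z (le_trans h.le (min_le_left c x)))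

lemma quad_ineq (a b s t : ℝ) (hs : 0 < s) (hst : s < t) :
    (a + b) ^ 2 / (4 * t) ≤ a ^ 2 / (4 * s) + b ^ 2 / (4 * (t - s)) := by
  have h1 : (0:ℝ) < 4 * s := by linarith
  have h2 : (0:ℝ) < 4 * (t - s) := by linarith
  have h3 : (0:ℝ) < 4 * t := by linarith
  rw [div_add_div _ _ (ne_of_gt h1) (ne_of_gt h2), div_le_div_iff₀ h3 (by positivity)]
  nlinarith [sq_nonneg (a * (t - s) - b * s)]

lemma hopfLax_min (u0 : ℝ → ℝ) (hmono : Monotone u0)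
    (hlc : ∀ y : ℝ, ContinuousWithinAt u0 (Iic y) y)
    (hgrowth : Tendsto (fun y => u0 y / y ^ 2) atBot (nhds 0))
    (x t : ℝ) (ht : 0 < t) :
    ∃ y₀ ≤ x, hopfLax u0 x t = u0 y₀ + (x - y₀) ^ 2 / (4 * t) ∧
      ∀ z ≤ x, hopfLax u0 x t ≤ u0 z + (x - z) ^ 2 / (4 * t) := by
  obtain ⟨y₀, hy₀x, hmin⟩ := exists_min u0 hmono hlc hgrowth x t ht
  have heq : hopfLax u0 x t = u0 y₀ + (x - y₀) ^ 2 / (4 * t) := by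
    rw [hopfLax, if_neg (ne_of_gt ht)]
    apply le_antisymm
    · exact csInf_le ⟨u0 y₀ + (x - y₀) ^ 2 / (4 * t), by
        rintro _ ⟨z, hz, rfl⟩; exact hmin z hz⟩ (mem_image_of_mem _ hy₀x)
    · exact le_csInf ⟨_, mem_image_of_mem _ hy₀x⟩ (by rintro _ ⟨z, hz, rfl⟩; exact hmin z hz)
  exact ⟨y₀, hy₀x, heq, fun z hz => heq ▸ hmin z hz⟩

lemma hopfLax_semigroup_le (u0 : ℝ → ℝ) (hmono : Monotone u0)
    (hlc : ∀ y : ℝ, ContinuousWithinAt u0 (Iic y) y)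
    (hgrowth : Tendsto (fun y => u0 y / y ^ 2) atBot (nhds 0))
    (s t x y : ℝ) (hs : 0 ≤ s) (hst : s < t) (hyx : y ≤ x) :
    hopfLax u0 x t ≤ hopfLax u0 y s + (x - y) ^ 2 / (4 * (t - s)) := by
  have ht : 0 < t := lt_of_le_of_lt hs hst
  obtain ⟨y₀, hy₀x, heq, hmin⟩ := hopfLax_min u0 hmono hlc hgrowth x t ht
  rcases eq_or_lt_of_le hs with hs0 | hs0
  · rw [← hs0, hopfLax_zero, sub_zero]
    exact hmin y hyx
  · rw [hopfLax_of_ne u0 y s (ne_of_gt hs0)]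
    rw [← sub_le_iff_le_add]
    have hne : ((fun z => u0 z + (y - z) ^ 2 / (4 * s)) '' Iic y).Nonempty :=
      ⟨_, mem_image_of_mem _ (mem_Iic.2 (le_refl y))⟩
    apply le_csInf hne
    rintro _ ⟨z, hz, rfl⟩
    rw [sub_le_iff_le_add]
    have hzx : z ≤ x := le_trans hz hyx
    have h1 : hopfLax u0 x t ≤ u0 z + (x - z) ^ 2 / (4 * t) := hmin z hzx
    have h2 : (x - z) ^ 2 / (4 * t) ≤ (y - z) ^ 2 / (4 * s) + (x - y) ^ 2 / (4 * (t - s)) := by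
      have := quad_ineq (y - z) (x - y) s t hs0 hst
      rw [show y - z + (x - y) = x - z by ring] at this
      exact this
    linarith

lemma minSet_nonempty (u0 : ℝ → ℝ) (hmono : Monotone u0)
    (hlc : ∀ y : ℝ, ContinuousWithinAt u0 (Iic y) y)
    (hgrowth : Tendsto (fun y => u0 y / y ^ 2) atBot (nhds 0))
    (s t x : ℝ) (hs : 0 ≤ s) (hst : s < t) :
    (minSet u0 x s t).Nonempty := by
  have ht : 0 < t := lt_of_le_of_lt hs hst
  obtain ⟨z, hzx, heq, hmin⟩ := hopfLax_min u0 hmono hlc hgrowth x t ht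
  rcases eq_or_lt_of_le hs with hs0 | hs0
  · refine ⟨z, hzx, ?_⟩
    rw [← hs0, hopfLax_zero, sub_zero]
    exact heq
  · obtain ⟨y, hy⟩ : ∃ y : ℝ, y = z + (s / t) * (x - z) := ⟨_, rfl⟩
    have hxz : 0 ≤ x - z := by linarith
    have hst' : s / t ≤ 1 := (div_le_one ht).2 hst.le
    have hst0 : 0 ≤ s / t := div_nonneg hs ht.le
    have hzy : z ≤ y := by rw [hy]; nlinarith [mul_nonneg hst0 hxz]
    have hyx : y ≤ x := by
      have h5 : (0:ℝ) ≤ 1 - s / t := by linarith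
      rw [hy]; nlinarith [mul_nonneg h5 hxz]
    refine ⟨y, hyx, le_antisymm
      (hopfLax_semigroup_le u0 hmono hlc hgrowth s t x y hs hst hyx) ?_⟩
    obtain ⟨w, hwy, heqy, hminy⟩ := hopfLax_min u0 hmono hlc hgrowth y s hs0
    have h1 : hopfLax u0 y s ≤ u0 z + (y - z) ^ 2 / (4 * s) := hminy z hzy
    have h2 : u0 z + (y - z) ^ 2 / (4 * s) + (x - y) ^ 2 / (4 * (t - s)) =
        u0 z + (x - z) ^ 2 / (4 * t) := by
      have hyz : y - z = (s / t) * (x - z) := by rw [hy]; ring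
      have hxy : x - y = ((t - s) / t) * (x - z) := by
        rw [hy]; field_simp; ring
      have ht0 : t ≠ 0 := ne_of_gt ht
      have hs0' : s ≠ 0 := ne_of_gt hs0
      have hts0 : t - s ≠ 0 := ne_of_gt (by linarith : (0:ℝ) < t - s)
      rw [hyz, hxy]
      field_simp
      ring
    linarith [heq]

/-- Monotonicity of minimizers in x: if x₁ < x₂ then
y⁺(x₁;s,t) ≤ y⁻(x₂;s,t). -/
theorem yplus_le_yminus_of_lt
    (u0 : ℝ → ℝ) (hmono : Monotone u0)
    (hlc : ∀ y : ℝ, ContinuousWithinAt u0 (Iic y) y)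
    (hgrowth : Tendsto (fun y => u0 y / y ^ 2) atBot (nhds 0))
    (s t x₁ x₂ : ℝ) (hs : 0 ≤ s) (hst : s < t) (hx : x₁ < x₂) :
    yplus u0 x₁ s t ≤ yminus u0 x₂ s t := by
  have ne1 := minSet_nonempty u0 hmono hlc hgrowth s t x₁ hs hst
  have ne2 := minSet_nonempty u0 hmono hlc hgrowth s t x₂ hs hst
  have key : ∀ y₁ ∈ minSet u0 x₁ s t, ∀ y₂ ∈ minSet u0 x₂ s t, y₁ ≤ y₂ := by
    rintro y₁ ⟨hy₁x, he₁⟩ y₂ ⟨hy₂x, he₂⟩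
    by_contra hlt
    push_neg at hlt
    have hy₂x₁ : y₂ ≤ x₁ := le_trans hlt.le hy₁x
    have hy₁x₂ : y₁ ≤ x₂ := le_trans hy₁x hx.le
    have h1 := hopfLax_semigroup_le u0 hmono hlc hgrowth s t x₁ y₂ hs hst hy₂x₁
    have h2 := hopfLax_semigroup_le u0 hmono hlc hgrowth s t x₂ y₁ hs hst hy₁x₂
    set τ : ℝ := 4 * (t - s) with hτdef
    have hτ : 0 < τ := by simp only [hτdef]; linarith
    have hsum : 0 ≤ ((x₁ - y₂) ^ 2 - (x₁ - y₁) ^ 2 + ((x₂ - y₁) ^ 2 - (x₂ - y₂) ^ 2)) / τ := by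
      have hS : 0 ≤ ((x₁ - y₂) ^ 2 - (x₁ - y₁) ^ 2) / τ +
          ((x₂ - y₁) ^ 2 - (x₂ - y₂) ^ 2) / τ := by
        have e1 : ((x₁ - y₂) ^ 2 - (x₁ - y₁) ^ 2) / τ =
            (x₁ - y₂) ^ 2 / τ - (x₁ - y₁) ^ 2 / τ := by ring
        have e2 : ((x₂ - y₁) ^ 2 - (x₂ - y₂) ^ 2) / τ =
            (x₂ - y₁) ^ 2 / τ - (x₂ - y₂) ^ 2 / τ := by ring
        rw [e1, e2]
        linarith [he₁, he₂, h1, h2]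
      rwa [← add_div] at hS
    have hPQ : 0 ≤ (x₁ - y₂) ^ 2 - (x₁ - y₁) ^ 2 + ((x₂ - y₁) ^ 2 - (x₂ - y₂) ^ 2) := by
      have h := mul_nonneg hsum hτ.le
      rwa [div_mul_cancel₀ _ (ne_of_gt hτ)] at h
    nlinarith [mul_pos (sub_pos.2 hx) (sub_pos.2 hlt)]
  refine le_csInf ne2 (fun y₂ hy₂ => csSup_le ne1 (fun y₁ hy₁ => key y₁ hy₁ y₂ hy₂))
end

section
/- Let u0, u, and the extremal minimizers y±(x;s,t) be as in the Hopf-Lax setting with g(x) = x²/4. Then for 0 ≤ s < s₁ < t, y±(x; s₁, t) = ((s₁ - s)/(t - s))·x + ((t - s₁)/(t - s))·y±(x; s, t). In particular, the minimal and maximal backward characteristics from (x,t) to time s₁ are obtained by linear interpolation along the segment from (y±(x;s,t), s) to (x,t). -/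
open Set Filter MeasureTheory
open scoped NNReal ENNReal

lemma quad_id (a b u v : ℝ) (ha : 0 < a) (hb : 0 < b) :
    u^2/(4*a) + v^2/(4*b) - (u+v)^2/(4*(a+b)) = (b*u - a*v)^2/(4*(a*b*(a+b))) := by
  field_simp
  ring

lemma quad_ge (a b u v : ℝ) (ha : 0 < a) (hb : 0 < b) :
    (u+v)^2/(4*(a+b)) ≤ u^2/(4*a) + v^2/(4*b) := by
  have h := quad_id a b u v ha hb
  have h2 : 0 ≤ (b*u - a*v)^2/(4*(a*b*(a+b))) := by positivity
  linarith

lemma quad_eq (a b u v : ℝ) (ha : 0 < a) (hb : 0 < b)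
    (h : u^2/(4*a) + v^2/(4*b) = (u+v)^2/(4*(a+b))) : b*u = a*v := by
  have hid := quad_id a b u v ha hb
  have h0 : (b*u - a*v)^2/(4*(a*b*(a+b))) = 0 := by rw [← hid, h, sub_self]
  have hD : (0:ℝ) < 4*(a*b*(a+b)) := by positivity
  have h1 : (b*u - a*v)^2 = 0 := by
    rcases div_eq_zero_iff.mp h0 with h' | h'
    · exact h'
    · exact absurd h' hD.ne'
  have := pow_eq_zero_iff (n := 2) (by norm_num) |>.mp h1
  linarith [sub_eq_zero.mp this]

lemma quad_interp (a b x y : ℝ) (ha : 0 < a) (hb : 0 < b) :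
    ((a*x+b*y)/(a+b) - y)^2/(4*a) + (x - (a*x+b*y)/(a+b))^2/(4*b) = (x-y)^2/(4*(a+b)) := by
  have hab : a + b ≠ 0 := by positivity
  field_simp
  ring

lemma lsc_of_mono {u0 : ℝ → ℝ} (hmono : Monotone u0)
    (hlc : ∀ y : ℝ, ContinuousWithinAt u0 (Iic y) y) : LowerSemicontinuous u0 := by
  intro y c hc
  rw [← nhdsLE_sup_nhdsGT (a := y)]
  rw [eventually_sup]
  constructor
  · exact (hlc y) (lt_mem_nhds hc)
  · filter_upwards [self_mem_nhdsWithin] with z hz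
    exact hc.trans_le (hmono (le_of_lt hz))

lemma lsc_min_Icc {f : ℝ → ℝ} (hf : LowerSemicontinuous f) {a b : ℝ} (hab : a ≤ b) :
    ∃ y ∈ Icc a b, ∀ z ∈ Icc a b, f y ≤ f z := by
  have hne : (Icc a b).Nonempty := nonempty_Icc.2 hab
  haveI : Nonempty ↥(f '' Icc a b) := (hne.image f).to_subtype
  set Z : ↥(f '' Icc a b) → Set ℝ := fun c => Icc a b ∩ f ⁻¹' (Iic (c : ℝ)) with hZ
  have hcl : ∀ c, IsClosed (Z c) := fun c => isClosed_Icc.inter (hf.isClosed_preimage _)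
  have hcomp : ∀ c, IsCompact (Z c) :=
    fun c => isCompact_Icc.inter_right (hf.isClosed_preimage _)
  have hnon : ∀ c, (Z c).Nonempty := by
    rintro ⟨c, y, hy, rfl⟩
    exact ⟨y, hy, by simp⟩
  have hdir : Directed (· ⊇ ·) Z := by
    rintro c d
    rcases le_total (c : ℝ) (d : ℝ) with h | h
    · exact ⟨c, subset_rfl, fun y hy => ⟨hy.1, le_trans hy.2 h⟩⟩
    · exact ⟨d, fun y hy => ⟨hy.1, le_trans hy.2 h⟩, subset_rfl⟩
  obtain ⟨y, hy⟩ :=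
    IsCompact.nonempty_iInter_of_directed_nonempty_isCompact_isClosed Z hdir hnon hcomp hcl
  have hyK : y ∈ Icc a b := (mem_iInter.1 hy (Classical.arbitrary _)).1
  exact ⟨y, hyK, fun z hz => (mem_iInter.1 hy ⟨f z, z, hz, rfl⟩).2⟩

lemma exists_lb {u0 : ℝ → ℝ} (hmono : Monotone u0)
    (hgrowth : Tendsto (fun y => u0 y / y ^ 2) atBot (nhds 0))
    (c : ℝ) (hc : 0 < c) : ∃ C : ℝ, 0 ≤ C ∧ ∀ y, -(c * y^2) - C ≤ u0 y := by
  have h := Metric.tendsto_nhds.mp hgrowth c hc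
  rw [eventually_atBot] at h
  obtain ⟨M₀, hM⟩ := h
  set M := min M₀ (-1) with hMdef
  have hM1 : M ≤ -1 := min_le_right _ _
  refine ⟨max 0 (-(u0 M)), le_max_left _ _, fun y => ?_⟩
  rcases le_or_gt y M with hy | hy
  · have h1 := hM y (le_trans hy (min_le_left _ _))
    rw [Real.dist_eq, sub_zero] at h1
    have hy2 : (0:ℝ) < y^2 := by nlinarith [hM1, hy]
    have h2 : -c < u0 y / y^2 := by
      have := abs_lt.mp h1
      linarith [this.1]
    have h3 : -(c * y^2) < u0 y := by
      have := (lt_div_iff₀ hy2).mp h2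
      nlinarith
    linarith [le_max_left (0:ℝ) (-(u0 M))]
  · have h1 : u0 M ≤ u0 y := hmono hy.le
    have h2 : -(max 0 (-(u0 M))) ≤ u0 M := by
      have := le_max_right (0:ℝ) (-(u0 M))
      linarith
    nlinarith [sq_nonneg y, le_max_left (0:ℝ) (-(u0 M))]

section core
variable {u0 : ℝ → ℝ} (hmono : Monotone u0)
    (hlc : ∀ y : ℝ, ContinuousWithinAt u0 (Iic y) y)
    (hgrowth : Tendsto (fun y => u0 y / y ^ 2) atBot (nhds 0))

include hmono hlc hgrowth

lemma hopfLax_attain {t : ℝ} (ht : 0 < t) (x : ℝ) :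
    ∃ y, y ≤ x ∧ (∀ z, z ≤ x → u0 y + (x-y)^2/(4*t) ≤ u0 z + (x-z)^2/(4*t)) ∧
      hopfLax u0 x t = u0 y + (x-y)^2/(4*t) := by
  obtain ⟨C, hC0, hC⟩ := exists_lb hmono hgrowth (8*t)⁻¹ (by positivity)
  have hf : LowerSemicontinuous (fun z => u0 z + (x-z)^2/(4*t)) :=
    (lsc_of_mono hmono hlc).add
      ((Continuous.div_const (by continuity) _).lowerSemicontinuous)
  have hg : ∀ z : ℝ, (z-2*x)^2/(8*t) - x^2/(4*t) - C ≤ u0 z + (x-z)^2/(4*t) := by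
    intro z
    have h1 := hC z
    have h2 : (x-z)^2/(4*t) + x^2/(4*t) - (z-2*x)^2/(8*t) = (8*t)⁻¹ * z^2 := by
      field_simp; ring
    linarith
  set D := max (8*t*(u0 x + C) + 2*x^2) 0 with hDdef
  set R := min x (2*x - (1 + D)) with hRdef
  have hRx : R ≤ x := min_le_left _ _
  have hcoer : ∀ z, z < R → u0 x < u0 z + (x-z)^2/(4*t) := by
    intro z hz
    have hzR : z ≤ 2*x - (1+D) := le_of_lt (lt_of_lt_of_le hz (min_le_right _ _))
    have hD0 : (0:ℝ) ≤ D := le_max_right _ _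
    have hDB : 8*t*(u0 x + C) + 2*x^2 ≤ D := le_max_left _ _
    have h4 : 8*t*(u0 x + C) + 2*x^2 < (z-2*x)^2 := by nlinarith
    have h6 : (u0 x + x^2/(4*t) + C) * (8*t) = 8*t*(u0 x + C) + 2*x^2 := by
      field_simp; ring
    have h5 : u0 x + x^2/(4*t) + C < (z-2*x)^2/(8*t) := by
      rw [lt_div_iff₀ (by positivity)]
      linarith
    linarith [hg z]
  obtain ⟨y, hyIcc, hymin⟩ := lsc_min_Icc hf hRx
  have hglobal : ∀ z, z ≤ x → u0 y + (x-y)^2/(4*t) ≤ u0 z + (x-z)^2/(4*t) := by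
    intro z hzx
    rcases le_or_gt R z with h | h
    · exact hymin z ⟨h, hzx⟩
    · have h1 := hcoer z h
      have h2 : u0 y + (x-y)^2/(4*t) ≤ u0 x + (x-x)^2/(4*t) := hymin x ⟨hRx, le_refl x⟩
      have h3 : (x-x)^2/(4*t) = 0 := by simp
      linarith
  refine ⟨y, hyIcc.2, hglobal, ?_⟩
  unfold hopfLax
  rw [if_neg ht.ne']
  apply le_antisymm
  · exact csInf_le ⟨u0 y + (x-y)^2/(4*t),
      by rintro _ ⟨z, hz, rfl⟩; exact hglobal z hz⟩ ⟨y, hyIcc.2, rfl⟩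
  · exact le_csInf ⟨_, ⟨x, self_mem_Iic, rfl⟩⟩ (by rintro _ ⟨z, hz, rfl⟩; exact hglobal z hz)

lemma hopfLax_le {t : ℝ} (ht : 0 < t) {z x : ℝ} (hzx : z ≤ x) :
    hopfLax u0 x t ≤ u0 z + (x-z)^2/(4*t) := by
  obtain ⟨y, _, hmin, heq⟩ := hopfLax_attain hmono hlc hgrowth ht x
  rw [heq]
  exact hmin z hzx

lemma sg_le {s t : ℝ} (hs : 0 ≤ s) (hst : s < t) {z x : ℝ} (hzx : z ≤ x) :
    hopfLax u0 x t ≤ hopfLax u0 z s + (x-z)^2/(4*(t-s)) := by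
  rcases eq_or_lt_of_le hs with h0 | h0
  · rw [← h0, hopfLax_zero, sub_zero]
    exact hopfLax_le hmono hlc hgrowth (h0 ▸ hst) hzx
  · obtain ⟨y, hyz, hmin, heq⟩ := hopfLax_attain hmono hlc hgrowth h0 z
    have h1 : hopfLax u0 x t ≤ u0 y + (x-y)^2/(4*t) :=
      hopfLax_le hmono hlc hgrowth (hs.trans_lt hst) (hyz.trans hzx)
    have h2 := quad_ge s (t-s) (z-y) (x-z) h0 (by linarith)
    have h3 : z - y + (x - z) = x - y := by ring
    have h4 : s + (t - s) = t := by ring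
    rw [h3, h4] at h2
    rw [heq]
    linarith

lemma hl_lb {t : ℝ} (ht : 0 < t) {C : ℝ} (hC : ∀ w, -((8*t)⁻¹ * w^2) - C ≤ u0 w)
    {s : ℝ} (hs : 0 ≤ s) (hst : s ≤ t) (y : ℝ) :
    -(y^2/(4*t)) - C ≤ hopfLax u0 y s := by
  rcases eq_or_lt_of_le hs with h0 | h0
  · rw [← h0, hopfLax_zero]
    have := hC y
    have h1 : (8*t)⁻¹ * y^2 ≤ y^2/(4*t) := by
      rw [inv_mul_eq_div, div_le_div_iff₀ (by positivity) (by positivity)]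
      nlinarith [sq_nonneg y]
    linarith
  · unfold hopfLax
    rw [if_neg h0.ne']
    refine le_csInf ⟨_, ⟨y, self_mem_Iic, rfl⟩⟩ ?_
    rintro _ ⟨w, hw, rfl⟩
    simp only
    have h1 := hC w
    have h2 : (y-w)^2/(4*t) ≤ (y-w)^2/(4*s) := by
      rw [div_le_div_iff₀ (by positivity) (by positivity)]
      nlinarith [sq_nonneg (y-w)]
    have h3 : (y-w)^2/(4*t) + y^2/(4*t) - (8*t)⁻¹*w^2 = (2*y-w)^2/(8*t) := by
      field_simp; ring
    have h4 : (0:ℝ) ≤ (2*y-w)^2/(8*t) := by positivity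
    linarith

lemma minSet_nonempty_s4 (x : ℝ) {s t : ℝ} (hs : 0 ≤ s) (hst : s < t) :
    ∃ y, y ≤ x ∧ hopfLax u0 x t = hopfLax u0 y s + (x - y) ^ 2 / (4 * (t - s)) := by
  have ht : 0 < t := hs.trans_lt hst
  obtain ⟨y, hyx, hmin, heq⟩ := hopfLax_attain hmono hlc hgrowth ht x
  rcases eq_or_lt_of_le hs with h0 | h0
  · exact ⟨y, hyx, by rw [← h0, hopfLax_zero, sub_zero]; exact heq⟩
  · set z := (s*x + (t-s)*y)/t with hzdef
    have hd1 : z - y = s*(x-y)/t := by rw [hzdef]; field_simp; ring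
    have hd2 : x - z = (t-s)*(x-y)/t := by rw [hzdef]; field_simp; ring
    have hyz : y ≤ z := by
      have : (0:ℝ) ≤ s*(x-y)/t := by
        apply div_nonneg (mul_nonneg hs (by linarith)) ht.le
      linarith
    have hzx : z ≤ x := by
      have : (0:ℝ) ≤ (t-s)*(x-y)/t := by
        apply div_nonneg (mul_nonneg (by linarith) (by linarith)) ht.le
      linarith
    have hle := sg_le hmono hlc hgrowth hs hst hzx
    have h2 : hopfLax u0 z s ≤ u0 y + (z-y)^2/(4*s) :=
      hopfLax_le hmono hlc hgrowth h0 hyz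
    have hqi := quad_interp s (t-s) x y h0 (by linarith)
    have hz' : (s*x+(t-s)*y)/(s+(t-s)) = z := by
      rw [hzdef, show s+(t-s) = t by ring]
    rw [hz', show s+(t-s) = t by ring] at hqi
    refine ⟨z, hzx, le_antisymm hle ?_⟩
    rw [heq]
    linarith

lemma minSet_bddBelow (x : ℝ) {s t : ℝ} (hs : 0 ≤ s) (hst : s < t) :
    BddBelow (minSet u0 x s t) := by
  have ht : 0 < t := hs.trans_lt hst
  obtain ⟨C, hC0, hC⟩ := exists_lb hmono hgrowth (8*(2*t))⁻¹ (by positivity)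
  have hlb : ∀ y, -(y^2/(8*t)) - C ≤ hopfLax u0 y s := by
    intro y
    have h := hl_lb hmono hlc hgrowth (t := 2*t) (by linarith) hC hs (by linarith) y
    have h2 : y^2/(4*(2*t)) = y^2/(8*t) := by ring
    linarith
  obtain ⟨K, hK⟩ : ∃ K, K = hopfLax u0 x t + C := ⟨_, rfl⟩
  obtain ⟨D, hD⟩ : ∃ D, D = max (8*t*K + 2*x^2) 0 := ⟨_, rfl⟩
  refine ⟨2*x - (1 + D), ?_⟩
  rintro y ⟨hyx, hyeq⟩
  by_contra hcon
  push_neg at hcon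
  have h1 : (x-y)^2/(4*t) ≤ (x-y)^2/(4*(t-s)) := by
    rw [div_le_div_iff₀ (by linarith) (by linarith)]
    nlinarith [sq_nonneg (x-y)]
  have h2 : (x-y)^2/(4*(t-s)) ≤ K + y^2/(8*t) := by
    have := hlb y
    linarith
  have h3 : (x-y)^2/(4*t) - y^2/(8*t) = ((y-2*x)^2 - 2*x^2)/(8*t) := by
    field_simp; ring
  have h5 : (y-2*x)^2 - 2*x^2 ≤ K*(8*t) := by
    rw [← div_le_iff₀ (by positivity : (0:ℝ) < 8*t)]
    linarith
  have hD0 : (0:ℝ) ≤ D := hD ▸ le_max_right _ _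
  have hDB : 8*t*K + 2*x^2 ≤ D := hD ▸ le_max_left _ _
  have h6 : (1+D)^2 ≤ (y-2*x)^2 := by nlinarith
  nlinarith

lemma minSet_eq (x : ℝ) {s s₁ t : ℝ} (hs : 0 ≤ s) (hss : s < s₁) (hst : s₁ < t) :
    minSet u0 x s₁ t
      = (fun y => ((s₁-s)/(t-s))*x + ((t-s₁)/(t-s))*y) '' minSet u0 x s t := by
  have ha : 0 < s₁ - s := by linarith
  have hb : 0 < t - s₁ := by linarith
  have hts : 0 < t - s := by linarith
  ext z
  constructor
  · rintro ⟨hzx, hzeq⟩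
    obtain ⟨y, hyz, hyeq⟩ := minSet_nonempty_s4 hmono hlc hgrowth z hs hss
    have h1 := sg_le hmono hlc hgrowth hs (hss.trans hst) (hyz.trans hzx)
    have h2 := quad_ge (s₁-s) (t-s₁) (z-y) (x-z) ha hb
    rw [show z-y+(x-z) = x-y by ring, show s₁-s+(t-s₁) = t-s by ring] at h2
    have hEq1 : hopfLax u0 x t = hopfLax u0 y s + (x-y)^2/(4*(t-s)) := by
      apply le_antisymm h1
      linarith
    have hEq2 : (z-y)^2/(4*(s₁-s)) + (x-z)^2/(4*(t-s₁)) = (x-y)^2/(4*(t-s)) := by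
      linarith
    have hkey : (t-s₁)*(z-y) = (s₁-s)*(x-z) := by
      apply quad_eq (s₁-s) (t-s₁) (z-y) (x-z) ha hb
      rw [show z-y+(x-z) = x-y by ring, show s₁-s+(t-s₁) = t-s by ring]
      exact hEq2
    refine ⟨y, ⟨hyz.trans hzx, hEq1⟩, ?_⟩
    show ((s₁-s)/(t-s))*x + ((t-s₁)/(t-s))*y = z
    field_simp
    linear_combination -hkey
  · rintro ⟨y, ⟨hyx, hyeq⟩, hz⟩
    simp only at hz
    have hd1 : z - y = ((s₁-s)/(t-s))*(x-y) := by rw [← hz]; field_simp; ring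
    have hd2 : x - z = ((t-s₁)/(t-s))*(x-y) := by rw [← hz]; field_simp; ring
    have hyz : y ≤ z := by
      have h : (0:ℝ) ≤ ((s₁-s)/(t-s))*(x-y) :=
        mul_nonneg (by positivity) (by linarith)
      linarith
    have hzx : z ≤ x := by
      have h : (0:ℝ) ≤ ((t-s₁)/(t-s))*(x-y) :=
        mul_nonneg (by positivity) (by linarith)
      linarith
    have h1 := sg_le hmono hlc hgrowth hs hss hyz
    have h2 := sg_le hmono hlc hgrowth (by linarith : (0:ℝ) ≤ s₁) hst hzx
    have hqi := quad_interp (s₁-s) (t-s₁) x y ha hb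
    have hz2 : ((s₁-s)*x+(t-s₁)*y)/((s₁-s)+(t-s₁)) = z := by
      rw [← hz, show (s₁-s)+(t-s₁) = t-s by ring]
      field_simp
    rw [hz2, show (s₁-s)+(t-s₁) = t-s by ring] at hqi
    refine ⟨hzx, le_antisymm h2 ?_⟩
    linarith

omit hmono hlc hgrowth in
lemma csInf_affine {c d : ℝ} (hd : 0 < d) {S : Set ℝ} (hne : S.Nonempty)
    (hbd : BddBelow S) :
    sInf ((fun y => c + d*y) '' S) = c + d * sInf S := by
  have hlb : ∀ z ∈ (fun y => c + d*y) '' S, c + d * sInf S ≤ z := by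
    rintro _ ⟨y, hy, rfl⟩
    have := csInf_le hbd hy
    simp only
    nlinarith
  apply le_antisymm
  · have h1 : ∀ y ∈ S, sInf ((fun y => c + d*y) '' S) ≤ c + d*y := fun y hy =>
      csInf_le ⟨c + d*sInf S, hlb⟩ ⟨y, hy, rfl⟩
    have h2 : ∀ y ∈ S, (sInf ((fun y => c + d*y) '' S) - c)/d ≤ y := by
      intro y hy
      rw [div_le_iff₀ hd]
      nlinarith [h1 y hy]
    have h3 := le_csInf hne h2
    rw [div_le_iff₀ hd] at h3
    nlinarith
  · exact le_csInf (hne.image _) hlb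

omit hmono hlc hgrowth in
lemma csSup_affine {c d : ℝ} (hd : 0 < d) {S : Set ℝ} (hne : S.Nonempty)
    (hbd : BddAbove S) :
    sSup ((fun y => c + d*y) '' S) = c + d * sSup S := by
  have hub : ∀ z ∈ (fun y => c + d*y) '' S, z ≤ c + d * sSup S := by
    rintro _ ⟨y, hy, rfl⟩
    have := le_csSup hbd hy
    simp only
    nlinarith
  apply le_antisymm
  · exact csSup_le (hne.image _) hub
  · have h1 : ∀ y ∈ S, c + d*y ≤ sSup ((fun y => c + d*y) '' S) := fun y hy =>
      le_csSup ⟨c + d*sSup S, hub⟩ ⟨y, hy, rfl⟩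
    have h2 : ∀ y ∈ S, y ≤ (sSup ((fun y => c + d*y) '' S) - c)/d := by
      intro y hy
      rw [le_div_iff₀ hd]
      nlinarith [h1 y hy]
    have h3 := csSup_le hne h2
    rw [le_div_iff₀ hd] at h3
    nlinarith

end core

/-- For 0 ≤ s < s₁ < t,
y±(x;s₁,t) = ((s₁-s)/(t-s))·x + ((t-s₁)/(t-s))·y±(x;s,t):
the extremal backward characteristics interpolate linearly. -/
theorem ypm_linear_interpolation
    (u0 : ℝ → ℝ) (hmono : Monotone u0)
    (hlc : ∀ y : ℝ, ContinuousWithinAt u0 (Iic y) y)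
    (hgrowth : Tendsto (fun y => u0 y / y ^ 2) atBot (nhds 0))
    (s s₁ t x : ℝ) (hs : 0 ≤ s) (hss : s < s₁) (hst : s₁ < t) :
    yminus u0 x s₁ t
        = ((s₁ - s) / (t - s)) * x + ((t - s₁) / (t - s)) * yminus u0 x s t ∧
    yplus u0 x s₁ t
        = ((s₁ - s) / (t - s)) * x + ((t - s₁) / (t - s)) * yplus u0 x s t := by
  have hst' : s < t := hss.trans hst
  have hSne : (minSet u0 x s t).Nonempty := by
    obtain ⟨y, h1, h2⟩ := minSet_nonempty_s4 hmono hlc hgrowth x hs hst'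
    exact ⟨y, h1, h2⟩
  have hSbb := minSet_bddBelow hmono hlc hgrowth x hs hst'
  have hSba : BddAbove (minSet u0 x s t) := ⟨x, fun y hy => hy.1⟩
  have hseteq := minSet_eq hmono hlc hgrowth x hs hss hst
  have hd : 0 < (t-s₁)/(t-s) := by
    apply div_pos <;> linarith
  constructor
  · unfold yminus
    rw [hseteq, csInf_affine hd hSne hSbb]
  · unfold yplus
    rw [hseteq, csSup_affine hd hSne hSba]
end

section
/- In the Hopf-Lax setting with g(x) = x²/4, let y₁ ∈ I(x₁, t₁) (a minimizer at time 0 for the point (x₁,t₁) with t₁ > 0), and let z(t) = (t/t₁)·x₁ + (1 - t/t₁)·y₁ for t ∈ [0, t₁] be the line segment from (y₁, 0) to (x₁, t₁). Then: (i) z(t) ∈ I(x₁; t, t₁) for each t ∈ [0, t₁); and (ii) for all 0 ≤ s < t < t₁, the minimizer set I(z(t); s, t) equals the singleton {z(s)}. In particular, along the interior of the segment, Hopf-Lax minimizers are unique. -/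
open Set Filter MeasureTheory
open scoped NNReal ENNReal

lemma engel {a b p q : ℝ} (hp : 0 < p) (hq : 0 < q) :
    (a + b) ^ 2 / (p + q) ≤ a ^ 2 / p + b ^ 2 / q := by
  rw [div_add_div _ _ hp.ne' hq.ne', div_le_div_iff₀ (by positivity) (by positivity)]
  nlinarith [sq_nonneg (a * q - b * p), mul_pos hp hq]

lemma engel_eq {a b p q : ℝ} (hp : 0 < p) (hq : 0 < q)
    (h : a ^ 2 / p + b ^ 2 / q ≤ (a + b) ^ 2 / (p + q)) : a * q = b * p := by
  rw [div_add_div _ _ hp.ne' hq.ne', div_le_div_iff₀ (by positivity) (by positivity)] at h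
  have h1 : (a * q - b * p) ^ 2 ≤ 0 := by nlinarith
  have h2 := sq_nonneg (a * q - b * p)
  have h0 : (a * q - b * p) ^ 2 = 0 := le_antisymm h1 h2
  have := pow_eq_zero_iff (n := 2) (by norm_num) |>.mp h0
  linarith

lemma hopfLax_bdd (u0 : ℝ → ℝ) (hmono : Monotone u0)
    (hgrowth : Tendsto (fun y => u0 y / y ^ 2) atBot (nhds 0)) (x t : ℝ) (ht : 0 < t) :
    BddBelow ((fun y => u0 y + (x - y) ^ 2 / (4 * t)) '' Iic x) := by
  have hε : (0:ℝ) < 1 / (8 * t) := by positivity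
  obtain ⟨M, hM⟩ := eventually_atBot.mp (Metric.tendsto_nhds.mp hgrowth (1 / (8 * t)) hε)
  set M' := min M (min (-(4 * |x| + 1)) (-1)) with hM'
  refine ⟨min (u0 M') 0, ?_⟩
  rintro _ ⟨v, hv, rfl⟩
  by_cases hcase : M' ≤ v
  · have h1 : u0 M' ≤ u0 v := hmono hcase
    have h2 : 0 ≤ (x - v) ^ 2 / (4 * t) := by positivity
    calc min (u0 M') 0 ≤ u0 M' := min_le_left _ _
      _ ≤ u0 v + (x - v) ^ 2 / (4 * t) := by linarith
  · push_neg at hcase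
    have hvM : v ≤ M := le_trans hcase.le (min_le_left _ _)
    have hv1 : v ≤ -(4 * |x| + 1) :=
      le_trans hcase.le (le_trans (min_le_right _ _) (min_le_left _ _))
    have hd := hM v hvM
    rw [Real.dist_eq, sub_zero] at hd
    have hvpos : (0:ℝ) < v ^ 2 := by nlinarith [abs_nonneg x]
    have hu : -(1 / (8 * t)) * v ^ 2 < u0 v := by
      have h1 : -(1 / (8 * t)) < u0 v / v ^ 2 := (abs_lt.mp hd).1
      calc -(1 / (8 * t)) * v ^ 2 < (u0 v / v ^ 2) * v ^ 2 := by
            apply mul_lt_mul_of_pos_right h1 hvpos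
        _ = u0 v := by rw [div_mul_cancel₀ _ hvpos.ne']
    have hq : v ^ 2 / (8 * t) ≤ (x - v) ^ 2 / (4 * t) := by
      rw [div_le_div_iff₀ (by positivity) (by positivity)]
      nlinarith [sq_nonneg x, ht.le,
        mul_nonneg (by linarith [abs_nonneg x] : (0:ℝ) ≤ -v) (by linarith [neg_abs_le x, le_abs_self x] : (0:ℝ) ≤ x + |x|),
        mul_nonneg (by linarith [abs_nonneg x] : (0:ℝ) ≤ -v - 4 * |x|) (by linarith [abs_nonneg x] : (0:ℝ) ≤ -v)]
    calc min (u0 M') 0 ≤ 0 := min_le_right _ _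
      _ ≤ u0 v + (x - v) ^ 2 / (4 * t) := by
          have : -(1 / (8 * t)) * v ^ 2 = -(v ^ 2 / (8 * t)) := by ring
          linarith [this ▸ hu]

lemma hopfLax_dpp (u0 : ℝ → ℝ) (hmono : Monotone u0)
    (hgrowth : Tendsto (fun y => u0 y / y ^ 2) atBot (nhds 0))
    (x w s t : ℝ) (hs : 0 ≤ s) (hst : s < t) (hw : w ≤ x) :
    hopfLax u0 x t ≤ hopfLax u0 w s + (x - w) ^ 2 / (4 * (t - s)) := by
  have ht : 0 < t := lt_of_le_of_lt hs hst
  rw [hopfLax, if_neg ht.ne']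
  rcases eq_or_lt_of_le hs with hs0 | hs0
  · subst hs0
    rw [hopfLax, if_pos rfl, sub_zero]
    exact csInf_le (hopfLax_bdd u0 hmono hgrowth x t ht) ⟨w, hw, rfl⟩
  · rw [hopfLax, if_neg hs0.ne', ← sub_le_iff_le_add]
    apply le_csInf ((nonempty_Iic).image _)
    rintro b ⟨v, hv, rfl⟩
    rw [sub_le_iff_le_add]
    have h1 : sInf ((fun y => u0 y + (x - y) ^ 2 / (4 * t)) '' Iic x)
        ≤ u0 v + (x - v) ^ 2 / (4 * t) :=
      csInf_le (hopfLax_bdd u0 hmono hgrowth x t ht) ⟨v, le_trans hv hw, rfl⟩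
    have h2 : (x - v) ^ 2 / (4 * t) ≤ (w - v) ^ 2 / (4 * s) + (x - w) ^ 2 / (4 * (t - s)) := by
      have he := engel (a := w - v) (b := x - w) (p := 4 * s) (q := 4 * (t - s))
        (by positivity) (by nlinarith)
      have e1 : (w - v) + (x - w) = x - v := by ring
      have e2 : 4 * s + 4 * (t - s) = 4 * t := by ring
      rw [e1, e2] at he
      exact he
    linarith

set_option maxHeartbeats 1000000 in
/-- Let y₁ ∈ I(x₁,t₁) and z(t) = (t/t₁)x₁ + (1-t/t₁)y₁ the segment
from (y₁,0) to (x₁,t₁). Then (i) z(t) ∈ I(x₁;t,t₁) for t ∈ [0,t₁), and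
(ii) I(z(t);s,t) = {z(s)} for all 0 ≤ s < t < t₁. -/
theorem segment_minimizers
    (u0 : ℝ → ℝ) (hmono : Monotone u0)
    (hlc : ∀ y : ℝ, ContinuousWithinAt u0 (Iic y) y)
    (hgrowth : Tendsto (fun y => u0 y / y ^ 2) atBot (nhds 0))
    (x₁ t₁ y₁ : ℝ) (ht₁ : 0 < t₁) (hy₁ : y₁ ∈ minSet u0 x₁ 0 t₁) :
    (∀ t ∈ Ico (0:ℝ) t₁,
        (t / t₁) * x₁ + (1 - t / t₁) * y₁ ∈ minSet u0 x₁ t t₁) ∧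
    (∀ s t : ℝ, 0 ≤ s → s < t → t < t₁ →
        minSet u0 ((t / t₁) * x₁ + (1 - t / t₁) * y₁) s t
          = {(s / t₁) * x₁ + (1 - s / t₁) * y₁}) := by
  obtain ⟨hy1x, hy2⟩ := hy₁
  have hy2' : hopfLax u0 x₁ t₁ = u0 y₁ + (x₁ - y₁) ^ 2 / (4 * t₁) := by
    rw [hy2, hopfLax, if_pos rfl, sub_zero]
  -- z s ≤ z t for s ≤ t
  have hmono_z : ∀ s t : ℝ, s ≤ t →
      (s / t₁) * x₁ + (1 - s / t₁) * y₁ ≤ (t / t₁) * x₁ + (1 - t / t₁) * y₁ := by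
    intro s t hst
    have h1 : s / t₁ ≤ t / t₁ := by gcongr
    nlinarith [h1]
  -- z t ≤ x₁ for t ≤ t₁
  have hle : ∀ t : ℝ, t ≤ t₁ → (t / t₁) * x₁ + (1 - t / t₁) * y₁ ≤ x₁ := by
    intro t ht
    have h1 : t / t₁ ≤ 1 := (div_le_one ht₁).2 ht
    nlinarith
  -- y₁ ≤ z t for 0 ≤ t
  have hyz : ∀ t : ℝ, 0 ≤ t → y₁ ≤ (t / t₁) * x₁ + (1 - t / t₁) * y₁ := by
    intro t ht
    have h1 : 0 ≤ t / t₁ := by positivity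
    nlinarith
  -- key identity
  have key : ∀ t : ℝ, 0 ≤ t → t < t₁ →
      hopfLax u0 x₁ t₁ = hopfLax u0 ((t / t₁) * x₁ + (1 - t / t₁) * y₁) t
        + (x₁ - ((t / t₁) * x₁ + (1 - t / t₁) * y₁)) ^ 2 / (4 * (t₁ - t)) := by
    intro t ht0 ht1
    rcases eq_or_lt_of_le ht0 with h0 | h0
    · subst h0
      have hz0 : (0 / t₁) * x₁ + (1 - 0 / t₁) * y₁ = y₁ := by
        rw [zero_div]; ring
      rw [hz0]
      exact hy2
    · set zt := (t / t₁) * x₁ + (1 - t / t₁) * y₁ with hzt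
      apply le_antisymm
      · exact hopfLax_dpp u0 hmono hgrowth x₁ zt t t₁ ht0 ht1 (hle t ht1.le)
      · have h1 : hopfLax u0 zt t ≤ u0 y₁ + (zt - y₁) ^ 2 / (4 * t) := by
          rw [hopfLax, if_neg h0.ne']
          exact csInf_le (hopfLax_bdd u0 hmono hgrowth zt t h0) ⟨y₁, hyz t ht0, rfl⟩
        have h2 : (zt - y₁) ^ 2 / (4 * t) + (x₁ - zt) ^ 2 / (4 * (t₁ - t))
            = (x₁ - y₁) ^ 2 / (4 * t₁) := by
          rw [hzt]
          have e1 : t₁ - t ≠ 0 := sub_ne_zero_of_ne ht1.ne'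
          field_simp
          ring
        linarith
  refine ⟨fun t ht => ⟨hle t ht.2.le, key t ht.1 ht.2⟩, ?_⟩
  intro s t hs hst htt₁
  have ht0 : 0 < t := lt_of_le_of_lt hs hst
  have hst₁ : s < t₁ := hst.trans htt₁
  have keyt := key t ht0.le htt₁
  have keys := key s hs hst₁
  have ht₁t : t₁ - t ≠ 0 := sub_ne_zero_of_ne htt₁.ne'
  have ht₁s : t₁ - s ≠ 0 := sub_ne_zero_of_ne hst₁.ne'
  have hts : t - s ≠ 0 := sub_ne_zero_of_ne hst.ne'
  ext w
  simp only [minSet, mem_setOf_eq, mem_singleton_iff]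
  constructor
  · rintro ⟨hw1, hw2⟩
    have hwx : w ≤ x₁ := hw1.trans (hle t htt₁.le)
    have hdpp := hopfLax_dpp u0 hmono hgrowth x₁ w s t₁ hs hst₁ hwx
    have hpre : ((t / t₁) * x₁ + (1 - t / t₁) * y₁ - w) ^ 2 / (4 * (t - s))
        + (x₁ - ((t / t₁) * x₁ + (1 - t / t₁) * y₁)) ^ 2 / (4 * (t₁ - t))
        ≤ (x₁ - w) ^ 2 / (4 * (t₁ - s)) := by linarith
    have e1 : ((t / t₁) * x₁ + (1 - t / t₁) * y₁ - w)
        + (x₁ - ((t / t₁) * x₁ + (1 - t / t₁) * y₁)) = x₁ - w := by ring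
    have e2 : 4 * (t - s) + 4 * (t₁ - t) = 4 * (t₁ - s) := by ring
    rw [← e1, ← e2] at hpre
    have heq := engel_eq (a := (t / t₁) * x₁ + (1 - t / t₁) * y₁ - w)
      (b := x₁ - ((t / t₁) * x₁ + (1 - t / t₁) * y₁))
      (p := 4 * (t - s)) (q := 4 * (t₁ - t))
      (by nlinarith) (by nlinarith) hpre
    -- heq : (z t - w) * (4 * (t₁ - t)) = (x₁ - z t) * (4 * (t - s))
    have hxz : x₁ - ((t / t₁) * x₁ + (1 - t / t₁) * y₁) = (t₁ - t) * (x₁ - y₁) / t₁ := by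
      field_simp; ring
    rw [hxz] at heq
    have hcan : ((t / t₁) * x₁ + (1 - t / t₁) * y₁ - w) * (4 * (t₁ - t))
        = ((t - s) * (x₁ - y₁) / t₁) * (4 * (t₁ - t)) := by
      rw [heq]; field_simp
    have h4 : (4 : ℝ) * (t₁ - t) ≠ 0 := by
      intro h; apply ht₁t; linarith [h]
    have hzw := mul_right_cancel₀ h4 hcan
    have hw' : w = (t / t₁) * x₁ + (1 - t / t₁) * y₁ - (t - s) * (x₁ - y₁) / t₁ := by
      linarith
    rw [hw']
    field_simp
    ring
  · rintro rfl
    refine ⟨hmono_z s t hst.le, ?_⟩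
    have halg : (x₁ - ((s / t₁) * x₁ + (1 - s / t₁) * y₁)) ^ 2 / (4 * (t₁ - s))
        = (x₁ - ((t / t₁) * x₁ + (1 - t / t₁) * y₁)) ^ 2 / (4 * (t₁ - t))
        + ((t / t₁) * x₁ + (1 - t / t₁) * y₁
            - ((s / t₁) * x₁ + (1 - s / t₁) * y₁)) ^ 2 / (4 * (t - s)) := by
      field_simp
      ring
    linarith
end

section
/- Let 0 < s < t and x₁ = w(x₀; s, t) (the common value of w±(x₀;s,t), which agree for s > 0). Then y⁻(x₁, t) ≤ y⁻(x₀, s) ≤ y⁺(x₀, s) ≤ y⁺(x₁, t). Conversely, if these inequalities hold with the middle inequality strict (i.e., (x₀,s) is a shock), then x₁ = w(x₀; s, t). -/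
open Set Filter MeasureTheory
open scoped NNReal ENNReal

section
variable {u0 : ℝ → ℝ}

namespace FC

variable {u0 : ℝ → ℝ}

/-- Hopf–Lax integrand. -/
noncomputable def G (u0 : ℝ → ℝ) (x t y : ℝ) : ℝ := u0 y + (x - y) ^ 2 / (4 * t)

lemma lsc (hmono : Monotone u0) (hlc : ∀ y : ℝ, ContinuousWithinAt u0 (Iic y) y) :
    LowerSemicontinuous u0 := by
  intro y c hc
  rw [← nhdsLE_sup_nhdsGT y, eventually_sup]
  constructor
  · exact (hlc y).eventually_const_lt hc
  · filter_upwards [self_mem_nhdsWithin] with z hz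
    exact hc.trans_le (hmono (le_of_lt hz))

lemma coercive (hgrowth : Tendsto (fun y => u0 y / y ^ 2) atBot (nhds 0))
    (x t : ℝ) (ht : 0 < t) :
    ∃ M, M ≤ x ∧ ∀ y ≤ M, u0 x + 1 ≤ u0 y + (x - y) ^ 2 / (4 * t) := by
  have h32t : (0:ℝ) < 32 * t := by linarith
  have hev : ∀ᶠ y in atBot, |u0 y / y ^ 2| < 1 / (32 * t) := by
    have := Metric.tendsto_nhds.mp hgrowth (1 / (32 * t)) (by positivity)
    filter_upwards [this] with y hy
    simpa only [Real.dist_eq, sub_zero] using hy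
  obtain ⟨Y₀, hY₀⟩ := eventually_atBot.mp hev
  set K : ℝ := 32 * t * (|u0 x| + 1) with hK
  refine ⟨min (min Y₀ x) (min (-(2 * |x| + 1)) (-(K + 1))), le_trans (min_le_left _ _) (min_le_right _ _), ?_⟩
  intro y hy
  have hy1 : y ≤ Y₀ := hy.trans ((min_le_left _ _).trans (min_le_left _ _))
  have hy2 : y ≤ -(2 * |x| + 1) := hy.trans ((min_le_right _ _).trans (min_le_left _ _))
  have hy3 : y ≤ -(K + 1) := hy.trans ((min_le_right _ _).trans (min_le_right _ _))
  have hKpos : 0 ≤ K := by positivity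
  have hyneg : y < 0 := by nlinarith [abs_nonneg x]
  have hy2pos : (0:ℝ) < y ^ 2 := by nlinarith
  have h1 : -(1 / (32 * t)) * y ^ 2 < u0 y := by
    have h := (abs_lt.mp (hY₀ y hy1)).1
    calc -(1 / (32 * t)) * y ^ 2 = -(1 / (32 * t)) * y ^ 2 := rfl
    _ < u0 y := by
        have := (lt_div_iff₀ hy2pos).mp h
        linarith
  have h1' : -(y ^ 2) < u0 y * (32 * t) := by
    have := mul_lt_mul_of_pos_right h1 h32t
    calc -(y ^ 2) = -(1 / (32 * t)) * y ^ 2 * (32 * t) := by field_simp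
    _ < u0 y * (32 * t) := this
  have h2 : y ^ 2 ≤ 4 * (x - y) ^ 2 := by
    have hax : -|x| ≤ x := neg_abs_le x
    nlinarith [abs_nonneg x]
  have h3 : (K + 1) ^ 2 ≤ y ^ 2 := by nlinarith
  have hux : u0 x * (32 * t) ≤ |u0 x| * (32 * t) :=
    mul_le_mul_of_nonneg_right (le_abs_self _) h32t.le
  rw [← sub_le_iff_le_add', le_div_iff₀ (by positivity : (0:ℝ) < 4 * t)]
  nlinarith [h1', h2, h3, hux]

lemma G_lsc (hmono : Monotone u0) (hlc : ∀ y : ℝ, ContinuousWithinAt u0 (Iic y) y)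
    (x t : ℝ) : LowerSemicontinuous (G u0 x t) := by
  have h1 : LowerSemicontinuous u0 := lsc hmono hlc
  have h2 : Continuous fun y : ℝ => (x - y) ^ 2 / (4 * t) := by fun_prop
  exact h1.add h2.lowerSemicontinuous

lemma exists_min (hmono : Monotone u0) (hlc : ∀ y : ℝ, ContinuousWithinAt u0 (Iic y) y)
    (hgrowth : Tendsto (fun y => u0 y / y ^ 2) atBot (nhds 0))
    (x t : ℝ) (ht : 0 < t) :
    ∃ y₀, y₀ ≤ x ∧ ∀ z ≤ x, G u0 x t y₀ ≤ G u0 x t z := by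
  obtain ⟨M, hMx, hM⟩ := coercive hgrowth x t ht
  have hlscG := G_lsc hmono hlc x t
  -- inf over the compact interval [M, x]
  have hne : (G u0 x t '' Icc M x).Nonempty := ⟨G u0 x t x, ⟨x, ⟨hMx, le_refl x⟩, rfl⟩⟩
  have hbdd : BddBelow (G u0 x t '' Icc M x) := by
    refine ⟨u0 M, ?_⟩
    rintro v ⟨y, hy, rfl⟩
    have : u0 M ≤ u0 y := hmono hy.1
    have hnn : 0 ≤ (x - y) ^ 2 / (4 * t) := by positivity
    simp only [G]; linarith
  set c := sInf (G u0 x t '' Icc M x) with hc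
  set S : ℕ → Set ℝ := fun n => Icc M x ∩ {y | G u0 x t y ≤ c + 1 / (n + 1)} with hS
  have hSclosed : ∀ n, IsClosed (S n) := by
    intro n
    exact isClosed_Icc.inter (hlscG.isClosed_preimage _)
  have hScompact : ∀ n, IsCompact (S n) := fun n =>
    isCompact_Icc.of_isClosed_subset (hSclosed n) inter_subset_left
  have hSne : ∀ n, (S n).Nonempty := by
    intro n
    have hlt : c < c + 1 / (n + 1) := by
      have : (0:ℝ) < 1 / (n + 1) := by positivity
      linarith
    obtain ⟨v, ⟨y, hy, rfl⟩, hv⟩ := exists_lt_of_csInf_lt hne hlt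
    exact ⟨y, hy, hv.le⟩
  have hSsub : ∀ n, S (n + 1) ⊆ S n := by
    intro n y hy
    refine ⟨hy.1, ?_⟩
    have h2 := hy.2
    simp only [mem_setOf_eq] at h2 ⊢
    have h1 : (1:ℝ) / ((n:ℝ) + 1 + 1) ≤ 1 / ((n:ℝ) + 1) := by
      apply one_div_le_one_div_of_le
      · positivity
      · linarith
    push_cast at h2 ⊢
    linarith
  obtain ⟨y₀, hy₀⟩ := IsCompact.nonempty_iInter_of_sequence_nonempty_isCompact_isClosed
    S hSsub hSne (hScompact 0) hSclosed
  simp only [mem_iInter] at hy₀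
  have hy₀Icc : y₀ ∈ Icc M x := (hy₀ 0).1
  have hy₀min : G u0 x t y₀ ≤ c := by
    by_contra h
    push_neg at h
    obtain ⟨n, hn⟩ := exists_nat_one_div_lt (show (0:ℝ) < G u0 x t y₀ - c by linarith)
    have := (hy₀ n).2
    simp only [mem_setOf_eq] at this
    linarith
  refine ⟨y₀, hy₀Icc.2, ?_⟩
  intro z hz
  rcases le_or_gt z M with hzM | hzM
  · -- z ≤ M : G z ≥ u0 x + 1 > G x ≥ c ≥ G y₀
    have h1 : u0 x + 1 ≤ G u0 x t z := hM z hzM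
    have h2 : c ≤ G u0 x t x := csInf_le hbdd ⟨x, ⟨hMx, le_refl x⟩, rfl⟩
    have h3 : G u0 x t x = u0 x := by simp [G]
    linarith
  · have : c ≤ G u0 x t z := csInf_le hbdd ⟨z, ⟨hzM.le, hz⟩, rfl⟩
    linarith

end FC

end

section
variable {u0 : ℝ → ℝ}
variable (hmono : Monotone u0) (hlc : ∀ y : ℝ, ContinuousWithinAt u0 (Iic y) y)
    (hgrowth : Tendsto (fun y => u0 y / y ^ 2) atBot (nhds 0))

namespace FC

include hmono hlc hgrowth

lemma hopfLax_spec (x t : ℝ) (ht : 0 < t) :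
    ∃ y₀, y₀ ≤ x ∧ hopfLax u0 x t = G u0 x t y₀ ∧ ∀ z ≤ x, G u0 x t y₀ ≤ G u0 x t z := by
  obtain ⟨y₀, hy₀x, hy₀⟩ := exists_min hmono hlc hgrowth x t ht
  refine ⟨y₀, hy₀x, ?_, hy₀⟩
  rw [hopfLax, if_neg ht.ne']
  apply le_antisymm
  · exact csInf_le ⟨G u0 x t y₀, by rintro v ⟨z, hz, rfl⟩; exact hy₀ z hz⟩ ⟨y₀, hy₀x, rfl⟩
  · exact le_csInf ⟨G u0 x t x, ⟨x, le_refl x, rfl⟩⟩ (by rintro v ⟨z, hz, rfl⟩; exact hy₀ z hz)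

lemma hopfLax_le (x t : ℝ) (ht : 0 < t) {z : ℝ} (hz : z ≤ x) :
    hopfLax u0 x t ≤ G u0 x t z := by
  obtain ⟨y₀, _, heq, hmin⟩ := hopfLax_spec hmono hlc hgrowth x t ht
  rw [heq]; exact hmin z hz

omit hmono hlc hgrowth

lemma hopfLax_zero (y : ℝ) : hopfLax u0 y 0 = u0 y := by simp [hopfLax]

lemma mem_minSet_zero_iff {x t y : ℝ} (ht : 0 < t) :
    y ∈ minSet u0 x 0 t ↔ y ≤ x ∧ hopfLax u0 x t = G u0 x t y := by
  simp [minSet, hopfLax_zero, G]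

include hmono hlc hgrowth

lemma minSet_zero_min {x t y : ℝ} (ht : 0 < t) (hy : y ∈ minSet u0 x 0 t) :
    ∀ z ≤ x, G u0 x t y ≤ G u0 x t z := by
  intro z hz
  have h := ((mem_minSet_zero_iff ht).mp hy).2
  rw [← h]
  exact hopfLax_le hmono hlc hgrowth x t ht hz

lemma minSet_zero_nonempty (x t : ℝ) (ht : 0 < t) : (minSet u0 x 0 t).Nonempty := by
  obtain ⟨y₀, hy₀x, heq, _⟩ := hopfLax_spec hmono hlc hgrowth x t ht
  exact ⟨y₀, (mem_minSet_zero_iff ht).mpr ⟨hy₀x, heq⟩⟩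

lemma minSet_zero_bddBelow (x t : ℝ) (ht : 0 < t) : BddBelow (minSet u0 x 0 t) := by
  obtain ⟨M, hMx, hM⟩ := coercive hgrowth x t ht
  refine ⟨M, fun y hy => ?_⟩
  by_contra h
  push_neg at h
  have h1 : u0 x + 1 ≤ G u0 x t y := hM y h.le
  have h2 : hopfLax u0 x t = G u0 x t y := ((mem_minSet_zero_iff ht).mp hy).2
  have h3 : hopfLax u0 x t ≤ G u0 x t x := hopfLax_le hmono hlc hgrowth x t ht (le_refl x)
  have h4 : G u0 x t x = u0 x := by simp [G]
  linarith

omit hmono hlc hgrowth in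
lemma minSet_zero_bddAbove (x t : ℝ) : BddAbove (minSet u0 x 0 t) :=
  ⟨x, fun _ hy => hy.1⟩

lemma minSet_zero_closed (x t : ℝ) (ht : 0 < t) : IsClosed (minSet u0 x 0 t) := by
  have hset : minSet u0 x 0 t = Iic x ∩ (G u0 x t ⁻¹' Iic (hopfLax u0 x t)) := by
    ext y
    rw [mem_inter_iff, mem_minSet_zero_iff ht, mem_Iic, mem_preimage, mem_Iic]
    constructor
    · rintro ⟨h1, h2⟩; exact ⟨h1, h2.ge⟩
    · rintro ⟨h1, h2⟩
      exact ⟨h1, le_antisymm (hopfLax_le hmono hlc hgrowth x t ht h1) h2⟩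
  rw [hset]
  exact isClosed_Iic.inter ((G_lsc hmono hlc x t).isClosed_preimage _)

lemma yminus_mem (x t : ℝ) (ht : 0 < t) : yminus u0 x 0 t ∈ minSet u0 x 0 t :=
  (minSet_zero_closed hmono hlc hgrowth x t ht).csInf_mem
    (minSet_zero_nonempty hmono hlc hgrowth x t ht) (minSet_zero_bddBelow hmono hlc hgrowth x t ht)

lemma yplus_mem (x t : ℝ) (ht : 0 < t) : yplus u0 x 0 t ∈ minSet u0 x 0 t :=
  (minSet_zero_closed hmono hlc hgrowth x t ht).csSup_mem
    (minSet_zero_nonempty hmono hlc hgrowth x t ht) (minSet_zero_bddAbove x t)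

lemma yminus_le_yplus (x t : ℝ) (ht : 0 < t) : yminus u0 x 0 t ≤ yplus u0 x 0 t :=
  csInf_le_csSup (minSet_zero_nonempty hmono hlc hgrowth x t ht)
    (minSet_zero_bddBelow hmono hlc hgrowth x t ht) (minSet_zero_bddAbove x t)

omit hmono hlc hgrowth in
lemma G_le_iff {x t a b : ℝ} (ht : 0 < t) :
    G u0 x t a ≤ G u0 x t b ↔ u0 a * (4 * t) + (x - a) ^ 2 ≤ u0 b * (4 * t) + (x - b) ^ 2 := by
  have h4t : (0:ℝ) < 4 * t := by linarith
  rw [show G u0 x t a = (u0 a * (4 * t) + (x - a) ^ 2) / (4 * t) by rw [G]; field_simp,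
      show G u0 x t b = (u0 b * (4 * t) + (x - b) ^ 2) / (4 * t) by rw [G]; field_simp]
  exact div_le_div_iff_of_pos_right h4t

/-- No-crossing of backward minimizers. -/
lemma cross {x x' t y y' : ℝ} (ht : 0 < t) (hxx' : x < x')
    (hy : y ∈ minSet u0 x 0 t) (hy' : y' ∈ minSet u0 x' 0 t) : y ≤ y' := by
  by_contra h
  push_neg at h
  have hyx : y ≤ x := hy.1
  have h1 : G u0 x t y ≤ G u0 x t y' :=
    minSet_zero_min hmono hlc hgrowth ht hy y' (h.le.trans hyx)
  have h2 : G u0 x' t y' ≤ G u0 x' t y :=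
    minSet_zero_min hmono hlc hgrowth ht hy' y (hyx.trans hxx'.le)
  rw [G_le_iff ht] at h1 h2
  nlinarith [mul_pos (sub_pos.2 hxx') (sub_pos.2 h)]

lemma yminus_mono {x x' t : ℝ} (ht : 0 < t) (h : x ≤ x') :
    yminus u0 x 0 t ≤ yminus u0 x' 0 t := by
  rcases eq_or_lt_of_le h with rfl | h
  · exact le_refl _
  · exact cross hmono hlc hgrowth ht h (yminus_mem hmono hlc hgrowth x t ht)
      (yminus_mem hmono hlc hgrowth x' t ht)

end FC
end

section
variable {u0 : ℝ → ℝ}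
variable (hmono : Monotone u0) (hlc : ∀ y : ℝ, ContinuousWithinAt u0 (Iic y) y)
    (hgrowth : Tendsto (fun y => u0 y / y ^ 2) atBot (nhds 0))

namespace FC

omit hmono hlc hgrowth in
lemma cs_identity {s t : ℝ} (hs : 0 < s) (hst : s < t) (z y x : ℝ) :
    (y - z) ^ 2 / (4 * s) + (x - y) ^ 2 / (4 * (t - s)) - (x - z) ^ 2 / (4 * t) =
      ((y - z) * (t - s) - (x - y) * s) ^ 2 / (4 * s * (t - s) * t) := by
  have h1 : s ≠ 0 := hs.ne'
  have h2 : t - s ≠ 0 := (sub_pos.2 hst).ne'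
  have h3 : t ≠ 0 := (hs.trans hst).ne'
  field_simp
  ring

include hmono hlc hgrowth

lemma dpp_le {x y s t : ℝ} (hs : 0 < s) (hst : s < t) (hy : y ≤ x) :
    hopfLax u0 x t ≤ hopfLax u0 y s + (x - y) ^ 2 / (4 * (t - s)) := by
  have ht : 0 < t := hs.trans hst
  obtain ⟨z, hzy, heq, _⟩ := hopfLax_spec hmono hlc hgrowth y s hs
  have h1 : hopfLax u0 x t ≤ G u0 x t z :=
    hopfLax_le hmono hlc hgrowth x t ht (hzy.trans hy)
  have h2 : (x - z) ^ 2 / (4 * t) ≤ (y - z) ^ 2 / (4 * s) + (x - y) ^ 2 / (4 * (t - s)) := by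
    have hid := cs_identity hs hst z y x
    have hnn : 0 ≤ ((y - z) * (t - s) - (x - y) * s) ^ 2 / (4 * s * (t - s) * t) := by
      have : (0:ℝ) < 4 * s * (t - s) * t := by
        have := sub_pos.2 hst; positivity
      positivity
    linarith
  rw [heq]
  simp only [G] at h1 ⊢
  linarith

/-- Forward: a time-0 minimizer `z` for `(x,t)` generates the intermediate minimizer
`m = ((t-s)z + sx)/t ∈ minSet x s t`, with `z ∈ minSet m 0 s`. -/
lemma forward {x z s t : ℝ} (hs : 0 < s) (hst : s < t) (hz : z ∈ minSet u0 x 0 t) :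
    ((t - s) * z + s * x) / t ∈ minSet u0 x s t ∧
      z ∈ minSet u0 (((t - s) * z + s * x) / t) 0 s := by
  have ht : 0 < t := hs.trans hst
  have hts : 0 < t - s := sub_pos.2 hst
  set m : ℝ := ((t - s) * z + s * x) / t with hm
  have hzx : z ≤ x := hz.1
  have hzm : z ≤ m := by
    rw [hm, le_div_iff₀ ht]; nlinarith
  have hmx : m ≤ x := by
    rw [hm, div_le_iff₀ ht]; nlinarith
  have hkey : (m - z) * (t - s) - (x - m) * s = 0 := by
    rw [hm]; field_simp; ring
  have hsum : (m - z) ^ 2 / (4 * s) + (x - m) ^ 2 / (4 * (t - s)) = (x - z) ^ 2 / (4 * t) := by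
    have hid := cs_identity hs hst z m x
    rw [hkey] at hid
    simp at hid
    linarith
  have h3 : hopfLax u0 x t = u0 z + (x - z) ^ 2 / (4 * t) :=
    ((mem_minSet_zero_iff ht).mp hz).2
  have h1 : hopfLax u0 m s ≤ u0 z + (m - z) ^ 2 / (4 * s) :=
    hopfLax_le hmono hlc hgrowth m s hs hzm
  have h2 : hopfLax u0 x t ≤ hopfLax u0 m s + (x - m) ^ 2 / (4 * (t - s)) :=
    dpp_le hmono hlc hgrowth hs hst hmx
  have heq1 : hopfLax u0 x t = hopfLax u0 m s + (x - m) ^ 2 / (4 * (t - s)) := by linarith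
  have heq2 : hopfLax u0 m s = u0 z + (m - z) ^ 2 / (4 * s) := by linarith
  constructor
  · exact ⟨hmx, by rwa [show (4 : ℝ) * (t - s) = 4 * (t - s) by ring] at heq1⟩
  · exact (mem_minSet_zero_iff hs).mpr ⟨hzm, by rw [G]; exact heq2⟩

/-- Backward: intermediate minimizer + its own time-0 minimizer give a time-0 minimizer
for `(x,t)`, and the intermediate point lies on the straight characteristic. -/
lemma backward {x y z s t : ℝ} (hs : 0 < s) (hst : s < t)
    (hy : y ∈ minSet u0 x s t) (hz : z ∈ minSet u0 y 0 s) :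
    z ∈ minSet u0 x 0 t ∧ y = ((t - s) * z + s * x) / t := by
  have ht : 0 < t := hs.trans hst
  have hts : 0 < t - s := sub_pos.2 hst
  have hyx : y ≤ x := hy.1
  have hzy : z ≤ y := hz.1
  have h3 : hopfLax u0 x t = hopfLax u0 y s + (x - y) ^ 2 / (4 * (t - s)) := hy.2
  have h4 : hopfLax u0 y s = u0 z + (y - z) ^ 2 / (4 * s) :=
    ((mem_minSet_zero_iff hs).mp hz).2
  have h5 : hopfLax u0 x t ≤ u0 z + (x - z) ^ 2 / (4 * t) :=
    hopfLax_le hmono hlc hgrowth x t ht (hzy.trans hyx)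
  have hid := cs_identity hs hst z y x
  have hnn : 0 ≤ ((y - z) * (t - s) - (x - y) * s) ^ 2 / (4 * s * (t - s) * t) := by
    have : (0:ℝ) < 4 * s * (t - s) * t := by positivity
    positivity
  -- equality throughout
  have heqz : hopfLax u0 x t = u0 z + (x - z) ^ 2 / (4 * t) := by linarith
  have hzero : ((y - z) * (t - s) - (x - y) * s) ^ 2 / (4 * s * (t - s) * t) = 0 := by
    linarith
  have hkey : (y - z) * (t - s) - (x - y) * s = 0 := by
    have hpos : (0:ℝ) < 4 * s * (t - s) * t := by positivity
    have := (div_eq_zero_iff.mp hzero).resolve_right hpos.ne'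
    exact pow_eq_zero_iff (n := 2) (by norm_num) |>.mp this
  constructor
  · exact (mem_minSet_zero_iff ht).mpr ⟨hzy.trans hyx, by rw [G]; exact heqz⟩
  · rw [eq_div_iff ht.ne']; nlinarith [hkey]

lemma minSet_s_eq {x s t : ℝ} (hs : 0 < s) (hst : s < t) :
    minSet u0 x s t = (fun z => ((t - s) * z + s * x) / t) '' minSet u0 x 0 t := by
  apply Subset.antisymm
  · intro y hy
    obtain ⟨z, hz⟩ := minSet_zero_nonempty hmono hlc hgrowth y s hs
    obtain ⟨hz1, hz2⟩ := backward hmono hlc hgrowth hs hst hy hz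
    exact ⟨z, hz1, hz2.symm⟩
  · rintro _ ⟨z, hz, rfl⟩
    exact (forward hmono hlc hgrowth hs hst hz).1

lemma yminus_s {x s t : ℝ} (hs : 0 < s) (hst : s < t) :
    yminus u0 x s t = ((t - s) * yminus u0 x 0 t + s * x) / t := by
  have ht : 0 < t := hs.trans hst
  have hts : 0 < t - s := sub_pos.2 hst
  have hmap : ∀ a b : ℝ, a ≤ b → ((t - s) * a + s * x) / t ≤ ((t - s) * b + s * x) / t := by
    intro a b hab
    exact (div_le_div_iff_of_pos_right ht).mpr (by nlinarith)
  have hSne := minSet_zero_nonempty hmono hlc hgrowth x t (hs.trans hst)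
  have hSbdd := minSet_zero_bddBelow hmono hlc hgrowth x t (hs.trans hst)
  have hInfmem := yminus_mem hmono hlc hgrowth x t (hs.trans hst)
  rw [yminus, yminus, minSet_s_eq hmono hlc hgrowth hs hst]
  apply le_antisymm
  · refine csInf_le ⟨((t - s) * sInf (minSet u0 x 0 t) + s * x) / t, ?_⟩ ?_
    · rintro v ⟨a, ha, rfl⟩
      exact hmap _ _ (csInf_le hSbdd ha)
    · exact ⟨sInf (minSet u0 x 0 t), hInfmem, rfl⟩
  · apply le_csInf (hSne.image _)
    rintro v ⟨a, ha, rfl⟩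
    exact hmap _ _ (csInf_le hSbdd ha)

lemma yplus_s {x s t : ℝ} (hs : 0 < s) (hst : s < t) :
    yplus u0 x s t = ((t - s) * yplus u0 x 0 t + s * x) / t := by
  have ht : 0 < t := hs.trans hst
  have hts : 0 < t - s := sub_pos.2 hst
  have hmap : ∀ a b : ℝ, a ≤ b → ((t - s) * a + s * x) / t ≤ ((t - s) * b + s * x) / t := by
    intro a b hab
    exact (div_le_div_iff_of_pos_right ht).mpr (by nlinarith)
  have hSne := minSet_zero_nonempty hmono hlc hgrowth x t ht
  have hSbdd := minSet_zero_bddAbove (u0 := u0) x t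
  have hSupmem := yplus_mem hmono hlc hgrowth x t ht
  rw [yplus, yplus, minSet_s_eq hmono hlc hgrowth hs hst]
  apply le_antisymm
  · apply csSup_le (hSne.image _)
    rintro v ⟨a, ha, rfl⟩
    exact hmap _ _ (le_csSup hSbdd ha)
  · refine le_csSup ⟨((t - s) * sSup (minSet u0 x 0 t) + s * x) / t, ?_⟩ ?_
    · rintro v ⟨a, ha, rfl⟩
      exact hmap _ _ (le_csSup hSbdd ha)
    · exact ⟨sSup (minSet u0 x 0 t), hSupmem, rfl⟩

end FC
end

section
variable {u0 : ℝ → ℝ}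
variable (hmono : Monotone u0) (hlc : ∀ y : ℝ, ContinuousWithinAt u0 (Iic y) y)
    (hgrowth : Tendsto (fun y => u0 y / y ^ 2) atBot (nhds 0))

namespace FC

include hmono hlc hgrowth

/-- Fan lemma: if `(x₀,s)` lies between the extreme intermediate minimizers of `(x₁,t)`,
then the backward fans are nested. -/
lemma fan {x₀ x₁ s t : ℝ} (hs : 0 < s) (hst : s < t)
    (hlo : ((t - s) * yminus u0 x₁ 0 t + s * x₁) / t ≤ x₀)
    (hhi : x₀ ≤ ((t - s) * yplus u0 x₁ 0 t + s * x₁) / t) :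
    yminus u0 x₁ 0 t ≤ yminus u0 x₀ 0 s ∧ yplus u0 x₀ 0 s ≤ yplus u0 x₁ 0 t := by
  have ht : 0 < t := hs.trans hst
  constructor
  · -- minus side
    have hζ := yminus_mem hmono hlc hgrowth x₁ t ht
    obtain ⟨hp1, hp2⟩ := forward hmono hlc hgrowth hs hst hζ
    have hz := yminus_mem hmono hlc hgrowth x₀ s hs
    rcases eq_or_lt_of_le hlo with heq | hlt
    · -- p = x₀ : backward transfer
      rw [heq] at hp1 hp2
      have := backward hmono hlc hgrowth hs hst hp1 hz
      exact csInf_le (minSet_zero_bddBelow hmono hlc hgrowth x₁ t ht) this.1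
    · exact cross hmono hlc hgrowth hs hlt hp2 hz
  · -- plus side
    have hξ := yplus_mem hmono hlc hgrowth x₁ t ht
    obtain ⟨hq1, hq2⟩ := forward hmono hlc hgrowth hs hst hξ
    have hw := yplus_mem hmono hlc hgrowth x₀ s hs
    rcases eq_or_lt_of_le hhi with heq | hlt
    · rw [← heq] at hq1
      have := backward hmono hlc hgrowth hs hst hq1 hw
      exact le_csSup (minSet_zero_bddAbove x₁ t) this.1
    · exact cross hmono hlc hgrowth hs hlt hw hq2

lemma hopfLax_mono_x {x x' t : ℝ} (ht : 0 < t) (hxx' : x ≤ x') :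
    hopfLax u0 x t ≤ hopfLax u0 x' t := by
  obtain ⟨y', hy'x, heq, _⟩ := hopfLax_spec hmono hlc hgrowth x' t ht
  rcases le_or_gt y' x with h | h
  · have h1 : hopfLax u0 x t ≤ G u0 x t y' := hopfLax_le hmono hlc hgrowth x t ht h
    have h2 : G u0 x t y' ≤ G u0 x' t y' := by
      simp only [G]
      have hsq : (x - y') ^ 2 ≤ (x' - y') ^ 2 := by nlinarith
      have h4 : (0:ℝ) < 4 * t := by linarith
      have := (div_le_div_iff_of_pos_right h4).mpr hsq
      linarith
    linarith [heq]
  · have h1 : hopfLax u0 x t ≤ G u0 x t x := hopfLax_le hmono hlc hgrowth x t ht (le_refl x)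
    have h2 : G u0 x t x = u0 x := by simp [G]
    have h3 : u0 x ≤ u0 y' := hmono h.le
    have h4 : u0 y' ≤ G u0 x' t y' := by
      simp only [G]
      have : (0:ℝ) ≤ (x' - y') ^ 2 / (4 * t) := by positivity
      linarith
    linarith [heq]

end FC
end

section
variable {u0 : ℝ → ℝ}
variable (hmono : Monotone u0) (hlc : ∀ y : ℝ, ContinuousWithinAt u0 (Iic y) y)
    (hgrowth : Tendsto (fun y => u0 y / y ^ 2) atBot (nhds 0))

namespace FC

omit hmono hlc hgrowth in
private lemma arith_right (x₁ x' η L y' δ E : ℝ)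
    (hηL : η ≤ L) (hLx₁ : L ≤ x₁) (hx'1 : x₁ < x') (hx'2 : x' ≤ x₁ + δ)
    (hy'l : L ≤ y') (hy'u : y' ≤ L + δ) (hy'x' : y' ≤ x') (hδ1 : δ ≤ 1) (hδpos : 0 < δ)
    (hδε : δ * (4 * (x₁ - η) + 2) ≤ E) :
    (x₁ - L) ^ 2 + (x' - η) ^ 2 ≤ (x' - y') ^ 2 + (x₁ - η) ^ 2 + E := by
  have p1 : (x' - x₁) * (x' + x₁ - 2 * η) ≤ δ * (2 * (x₁ - η) + 1) := by
    have h1 : x' - x₁ ≤ δ := by linarith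
    have h2 : x' + x₁ - 2 * η ≤ 2 * (x₁ - η) + 1 := by linarith
    have h3 : 0 ≤ x' + x₁ - 2 * η := by linarith
    exact mul_le_mul h1 h2 h3 hδpos.le
  have e1 : (x' - η) ^ 2 - (x₁ - η) ^ 2 = (x' - x₁) * (x' + x₁ - 2 * η) := by ring
  have e2 : (x₁ - L) ^ 2 - (x' - y') ^ 2 =
      (x₁ - L - (x' - y')) * (x₁ - L + (x' - y')) := by ring
  have p2 : (x₁ - L) ^ 2 - (x' - y') ^ 2 ≤ δ * (2 * (x₁ - η) + 1) := by
    rcases le_or_gt (x₁ - L - (x' - y')) 0 with hneg | hposa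
    · have h1 : 0 ≤ x₁ - L := by linarith
      have h2 : x₁ - L ≤ x' - y' := by linarith
      nlinarith
    · have ha' : x₁ - L - (x' - y') ≤ δ := by linarith
      have hb0 : 0 ≤ x₁ - L + (x' - y') := by linarith
      have hbC : x₁ - L + (x' - y') ≤ 2 * (x₁ - η) + 1 := by linarith
      have := mul_le_mul ha' hbC hb0 hδpos.le
      linarith [e2]
  linarith [p1, p2, hδε, e1]

omit hmono hlc hgrowth in
private lemma arith_left (x₁ x' M y' δ E : ℝ)
    (hMx₁ : M ≤ x₁) (hx'1 : x' < x₁) (hx'2 : x₁ - δ ≤ x')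
    (hy'l : M - δ ≤ y') (hy'u : y' ≤ M) (hy'x' : y' ≤ x') (hδ1 : δ ≤ 1) (hδpos : 0 < δ)
    (hδε : δ * (2 * (x₁ - M) + 1) ≤ E) :
    (x₁ - M) ^ 2 ≤ (x' - y') ^ 2 + E := by
  have e2 : (x₁ - M) ^ 2 - (x' - y') ^ 2 =
      (x₁ - M - (x' - y')) * (x₁ - M + (x' - y')) := by ring
  have p2 : (x₁ - M) ^ 2 - (x' - y') ^ 2 ≤ δ * (2 * (x₁ - M) + 1) := by
    rcases le_or_gt (x₁ - M - (x' - y')) 0 with hneg | hposa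
    · have h1 : 0 ≤ x₁ - M := by linarith
      have h2 : x₁ - M ≤ x' - y' := by linarith
      nlinarith
    · have ha' : x₁ - M - (x' - y') ≤ δ := by linarith
      have hb0 : 0 ≤ x₁ - M + (x' - y') := by linarith
      have hbC : x₁ - M + (x' - y') ≤ 2 * (x₁ - M) + 1 := by linarith
      have := mul_le_mul ha' hbC hb0 hδpos.le
      linarith [e2]
  linarith [p2, hδε]

include hmono hlc hgrowth

/-- Right limit of `y⁻` is a minimizer at `x₁` (hence `≤ y⁺(x₁)`). -/
lemma right_limit (x₁ t : ℝ) (ht : 0 < t) :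
    sInf ((fun x => yminus u0 x 0 t) '' Ioi x₁) ∈ minSet u0 x₁ 0 t := by
  have h4t : (0:ℝ) < 4 * t := by linarith
  set f : ℝ → ℝ := fun x => yminus u0 x 0 t with hf
  have hSne : (f '' Ioi x₁).Nonempty := ⟨f (x₁ + 1), ⟨x₁ + 1, by simp, rfl⟩⟩
  have hbddS : BddBelow (f '' Ioi x₁) := by
    refine ⟨yplus u0 x₁ 0 t, ?_⟩
    rintro v ⟨x, hx, rfl⟩
    exact cross hmono hlc hgrowth ht hx (yplus_mem hmono hlc hgrowth x₁ t ht)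
      (yminus_mem hmono hlc hgrowth x t ht)
  set L := sInf (f '' Ioi x₁) with hL
  have hLlower : yplus u0 x₁ 0 t ≤ L := by
    apply le_csInf hSne
    rintro v ⟨x, hx, rfl⟩
    exact cross hmono hlc hgrowth ht hx (yplus_mem hmono hlc hgrowth x₁ t ht)
      (yminus_mem hmono hlc hgrowth x t ht)
  set η := yminus u0 x₁ 0 t with hη
  have hηmem := yminus_mem hmono hlc hgrowth x₁ t ht
  have hηx₁ : η ≤ x₁ := hηmem.1
  have hηL : η ≤ L := (yminus_le_yplus hmono hlc hgrowth x₁ t ht).trans hLlower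
  have hLx₁ : L ≤ x₁ := by
    apply le_of_forall_pos_le_add
    intro ε hε
    have h1 : L ≤ f (x₁ + ε) := csInf_le hbddS ⟨x₁ + ε, by simp [hε], rfl⟩
    have h2 : f (x₁ + ε) ≤ x₁ + ε := (yminus_mem hmono hlc hgrowth (x₁ + ε) t ht).1
    linarith
  have key : ∀ ε > 0, u0 L + (x₁ - L) ^ 2 / (4 * t) ≤ hopfLax u0 x₁ t + ε := by
    intro ε hε
    set C : ℝ := 4 * (x₁ - η) + 2 with hC
    have hCpos : 0 < C := by simp only [hC]; linarith
    set δ := min 1 (4 * t * ε / C) with hδ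
    have hδpos : 0 < δ := lt_min one_pos (by positivity)
    have hδ1 : δ ≤ 1 := min_le_left _ _
    have hδε : δ * C ≤ 4 * t * ε := by
      have h1 : δ ≤ 4 * t * ε / C := min_le_right _ _
      calc δ * C ≤ (4 * t * ε / C) * C := mul_le_mul_of_nonneg_right h1 hCpos.le
      _ = 4 * t * ε := div_mul_cancel₀ _ hCpos.ne'
    obtain ⟨v, ⟨x2, hx2, rfl⟩, hv⟩ := exists_lt_of_csInf_lt hSne
      (show L < L + δ by linarith)
    set x' := min x2 (x₁ + δ) with hx'
    have hx'1 : x₁ < x' := lt_min hx2 (by linarith)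
    have hx'2 : x' ≤ x₁ + δ := min_le_right _ _
    set y' := yminus u0 x' 0 t with hy'
    have hy'mem := yminus_mem hmono hlc hgrowth x' t ht
    have hy'x' : y' ≤ x' := hy'mem.1
    have hy'u : y' ≤ L + δ :=
      le_of_lt (lt_of_le_of_lt (yminus_mono hmono hlc hgrowth ht (min_le_left _ _)) hv)
    have hy'l : L ≤ y' := csInf_le hbddS ⟨x', hx'1, rfl⟩
    have key1 : u0 L ≤ u0 y' := hmono hy'l
    have key2 : hopfLax u0 x' t = u0 y' + (x' - y') ^ 2 / (4 * t) :=
      ((mem_minSet_zero_iff ht).mp hy'mem).2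
    have key3 : hopfLax u0 x' t ≤ u0 η + (x' - η) ^ 2 / (4 * t) :=
      hopfLax_le hmono hlc hgrowth x' t ht (hηx₁.trans hx'1.le)
    have key4 : hopfLax u0 x₁ t = u0 η + (x₁ - η) ^ 2 / (4 * t) :=
      ((mem_minSet_zero_iff ht).mp hηmem).2
    have hquad : (x₁ - L) ^ 2 + (x' - η) ^ 2 ≤ (x' - y') ^ 2 + (x₁ - η) ^ 2 + 4 * t * ε :=
      arith_right x₁ x' η L y' δ (4 * t * ε) hηL hLx₁ hx'1 hx'2 hy'l hy'u hy'x' hδ1 hδpos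
        (by simp only [hC] at hδε; linarith)
    have h5 := (div_le_div_iff_of_pos_right h4t).mpr hquad
    rw [add_div, add_div, add_div] at h5
    rw [mul_div_cancel_left₀ ε (by positivity : (4 * t : ℝ) ≠ 0)] at h5
    linarith
  have hle : hopfLax u0 x₁ t ≤ G u0 x₁ t L := hopfLax_le hmono hlc hgrowth x₁ t ht hLx₁
  have hge : G u0 x₁ t L ≤ hopfLax u0 x₁ t := by
    apply le_of_forall_pos_le_add
    intro ε hε
    exact key ε hε
  exact (mem_minSet_zero_iff ht).mpr ⟨hLx₁, le_antisymm hle hge⟩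

/-- Left limit of `y⁻` at `x₁` dominates `y⁻(x₁)`. -/
lemma left_limit (x₁ t : ℝ) (ht : 0 < t) :
    yminus u0 x₁ 0 t ≤ sSup ((fun x => yminus u0 x 0 t) '' Iio x₁) := by
  have h4t : (0:ℝ) < 4 * t := by linarith
  set f : ℝ → ℝ := fun x => yminus u0 x 0 t with hf
  have hSne : (f '' Iio x₁).Nonempty := ⟨f (x₁ - 1), ⟨x₁ - 1, by simp, rfl⟩⟩
  have hbddS : BddAbove (f '' Iio x₁) := by
    refine ⟨yminus u0 x₁ 0 t, ?_⟩
    rintro v ⟨x, hx, rfl⟩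
    exact yminus_mono hmono hlc hgrowth ht (le_of_lt hx)
  set M := sSup (f '' Iio x₁) with hM
  have hMle : M ≤ yminus u0 x₁ 0 t := by
    apply csSup_le hSne
    rintro v ⟨x, hx, rfl⟩
    exact yminus_mono hmono hlc hgrowth ht (le_of_lt hx)
  have hMx₁ : M ≤ x₁ := hMle.trans (yminus_mem hmono hlc hgrowth x₁ t ht).1
  -- show M ∈ minSet u0 x₁ 0 t, then yminus x₁ = sInf ≤ M
  have hkey : ∀ ε > 0, u0 M + (x₁ - M) ^ 2 / (4 * t) ≤ hopfLax u0 x₁ t + ε := by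
    intro ε hε
    obtain ⟨δ', hδ'pos, hδ'⟩ := Metric.continuousWithinAt_iff.mp (hlc M) (ε / 2) (by linarith)
    set C : ℝ := 2 * (x₁ - M) + 1 with hC
    have hCpos : 0 < C := by simp only [hC]; linarith
    set δ := min 1 (min δ' (4 * t * (ε / 2) / C)) with hδ
    have hδpos : 0 < δ := lt_min one_pos (lt_min hδ'pos (by positivity))
    have hδ1 : δ ≤ 1 := min_le_left _ _
    have hδδ' : δ ≤ δ' := (min_le_right _ _).trans (min_le_left _ _)
    have hδε : δ * C ≤ 4 * t * (ε / 2) := by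
      have h1 : δ ≤ 4 * t * (ε / 2) / C := (min_le_right _ _).trans (min_le_right _ _)
      calc δ * C ≤ (4 * t * (ε / 2) / C) * C := mul_le_mul_of_nonneg_right h1 hCpos.le
      _ = 4 * t * (ε / 2) := div_mul_cancel₀ _ hCpos.ne'
    obtain ⟨v, ⟨x2, hx2, rfl⟩, hv⟩ := exists_lt_of_lt_csSup hSne
      (show M - δ < M by linarith)
    set x' := max x2 (x₁ - δ) with hx'
    have hx'1 : x' < x₁ := max_lt hx2 (by linarith)
    have hx'2 : x₁ - δ ≤ x' := le_max_right _ _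
    set y' := yminus u0 x' 0 t with hy'
    have hy'mem := yminus_mem hmono hlc hgrowth x' t ht
    have hy'x' : y' ≤ x' := hy'mem.1
    have hy'l : M - δ < y' :=
      lt_of_lt_of_le hv (yminus_mono hmono hlc hgrowth ht (le_max_left _ _))
    have hy'u : y' ≤ M := le_csSup hbddS ⟨x', hx'1, rfl⟩
    have key1 : u0 M - u0 y' ≤ ε / 2 := by
      have hdist : dist y' M < δ' := by
        rw [Real.dist_eq, abs_of_nonpos (by linarith)]
        linarith
      have := hδ' (mem_Iic.mpr hy'u) hdist
      rw [Real.dist_eq] at this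
      have := abs_lt.mp this
      linarith [this.1]
    have key2 : hopfLax u0 x' t = u0 y' + (x' - y') ^ 2 / (4 * t) :=
      ((mem_minSet_zero_iff ht).mp hy'mem).2
    have key3 : hopfLax u0 x' t ≤ hopfLax u0 x₁ t :=
      hopfLax_mono_x hmono hlc hgrowth ht hx'1.le
    have hquad : (x₁ - M) ^ 2 ≤ (x' - y') ^ 2 + 4 * t * (ε / 2) :=
      arith_left x₁ x' M y' δ (4 * t * (ε / 2)) hMx₁ hx'1 hx'2 hy'l.le hy'u hy'x' hδ1 hδpos
        (by simp only [hC] at hδε; linarith)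
    have h5 := (div_le_div_iff_of_pos_right h4t).mpr hquad
    rw [add_div] at h5
    rw [mul_div_cancel_left₀ (ε / 2) (by positivity : (4 * t : ℝ) ≠ 0)] at h5
    linarith
  have hMmem : M ∈ minSet u0 x₁ 0 t := by
    have hle : hopfLax u0 x₁ t ≤ G u0 x₁ t M := hopfLax_le hmono hlc hgrowth x₁ t ht hMx₁
    have hge : G u0 x₁ t M ≤ hopfLax u0 x₁ t := by
      apply le_of_forall_pos_le_add
      intro ε hε
      exact hkey ε hε
    exact (mem_minSet_zero_iff ht).mpr ⟨hMx₁, le_antisymm hle hge⟩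
  exact csInf_le (minSet_zero_bddBelow hmono hlc hgrowth x₁ t ht) hMmem

end FC
end


/-- For 0 < s < t, if x₁ = w(x₀;s,t) then
y⁻(x₁,t) ≤ y⁻(x₀,s) ≤ y⁺(x₀,s) ≤ y⁺(x₁,t); conversely, if these inequalities
hold with the middle one strict then x₁ = w(x₀;s,t). -/
theorem forward_characteristic_nesting
    (u0 : ℝ → ℝ) (hmono : Monotone u0)
    (hlc : ∀ y : ℝ, ContinuousWithinAt u0 (Iic y) y)
    (hgrowth : Tendsto (fun y => u0 y / y ^ 2) atBot (nhds 0))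
    (x₀ x₁ s t : ℝ) (hs : 0 < s) (hst : s < t) :
    (x₁ = wminus u0 x₀ s t →
      yminus u0 x₁ 0 t ≤ yminus u0 x₀ 0 s ∧
      yminus u0 x₀ 0 s ≤ yplus u0 x₀ 0 s ∧
      yplus u0 x₀ 0 s ≤ yplus u0 x₁ 0 t) ∧
    ((yminus u0 x₁ 0 t ≤ yminus u0 x₀ 0 s ∧
      yminus u0 x₀ 0 s < yplus u0 x₀ 0 s ∧
      yplus u0 x₀ 0 s ≤ yplus u0 x₁ 0 t) → x₁ = wminus u0 x₀ s t) := by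
  have ht : 0 < t := hs.trans hst
  have hts : 0 < t - s := sub_pos.2 hst
  have hwdef : wminus u0 x₀ s t = sInf {x | x₀ ≤ yminus u0 x s t} := rfl
  have hys : ∀ x : ℝ, yminus u0 x s t = ((t - s) * yminus u0 x 0 t + s * x) / t :=
    fun x => FC.yminus_s hmono hlc hgrowth hs hst
  have hyxle : ∀ x : ℝ, yminus u0 x 0 t ≤ x := fun x =>
    (FC.yminus_mem hmono hlc hgrowth x t ht).1
  have hAbdd : BddBelow {x | x₀ ≤ yminus u0 x s t} := by
    refine ⟨x₀, fun x hx => ?_⟩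
    have h1 : x₀ ≤ yminus u0 x s t := hx
    have h2 : yminus u0 x s t ≤ x := by
      rw [hys x, div_le_iff₀ ht]
      nlinarith [hyxle x]
    linarith
  -- membership criterion via the formula
  have hmemA : ∀ x : ℝ, x₀ ≤ ((t - s) * yminus u0 x 0 t + s * x) / t →
      x ∈ {x | x₀ ≤ yminus u0 x s t} := by
    intro x hx
    rw [mem_setOf_eq, hys x]
    exact hx
  constructor
  · -- forward direction
    intro hx₁
    rw [hwdef] at hx₁
    -- A is nonempty
    have hAne : {x | x₀ ≤ yminus u0 x s t}.Nonempty := by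
      set Y := yminus u0 (x₀ + 1) 0 t with hY
      set xx := max (x₀ + 1) ((t * x₀ - (t - s) * Y) / s) with hxx
      refine ⟨xx, hmemA xx ?_⟩
      have h1 : Y ≤ yminus u0 xx 0 t :=
        FC.yminus_mono hmono hlc hgrowth ht (le_max_left _ _)
      have h2 : t * x₀ - (t - s) * Y ≤ xx * s :=
        (div_le_iff₀ hs).mp (le_max_right _ _)
      rw [le_div_iff₀ ht]
      nlinarith [mul_le_mul_of_nonneg_left h1 hts.le]
    -- every x > x₁ belongs to A
    have hup : ∀ x, x₁ < x → x ∈ {x | x₀ ≤ yminus u0 x s t} := by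
      intro x hx
      have hinf : sInf {x | x₀ ≤ yminus u0 x s t} < x := by rw [← hx₁]; exact hx
      obtain ⟨a, haA, hax⟩ := exists_lt_of_csInf_lt hAne hinf
      have h1 : x₀ ≤ yminus u0 a s t := haA
      rw [hys a] at h1
      have h2 : yminus u0 a 0 t ≤ yminus u0 x 0 t :=
        FC.yminus_mono hmono hlc hgrowth ht hax.le
      refine hmemA x (h1.trans ?_)
      apply (div_le_div_iff_of_pos_right ht).mpr
      nlinarith [mul_le_mul_of_nonneg_left h2 hts.le]
    -- nothing below x₁ belongs to A
    have hdown : ∀ x, x < x₁ → yminus u0 x s t < x₀ := by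
      intro x hx
      by_contra h
      push_neg at h
      have : x₁ ≤ x := by
        rw [hx₁]; exact csInf_le hAbdd h
      linarith
    -- lower bound : y_s⁻(x₁) ≤ x₀
    have hlo : ((t - s) * yminus u0 x₁ 0 t + s * x₁) / t ≤ x₀ := by
      apply le_of_forall_pos_le_add
      intro ε hε
      have hMbig := FC.left_limit hmono hlc hgrowth x₁ t ht
      have hSne : ((fun x => yminus u0 x 0 t) '' Iio x₁).Nonempty :=
        ⟨_, ⟨x₁ - 1, by simp, rfl⟩⟩
      obtain ⟨v, ⟨x2, hx2, rfl⟩, hv⟩ := exists_lt_of_lt_csSup hSne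
        (show sSup ((fun x => yminus u0 x 0 t) '' Iio x₁) - ε <
            sSup ((fun x => yminus u0 x 0 t) '' Iio x₁) by linarith)
      set x' := max x2 (x₁ - ε) with hx'
      have hx'1 : x' < x₁ := max_lt hx2 (by linarith)
      have hx'2 : x₁ - ε ≤ x' := le_max_right _ _
      have hyy : yminus u0 x₁ 0 t - ε ≤ yminus u0 x' 0 t := by
        have := FC.yminus_mono hmono hlc hgrowth ht (le_max_left x2 (x₁ - ε))
        linarith
      have hx'A := hdown x' hx'1
      rw [hys x'] at hx'A
      have hstep : ((t - s) * yminus u0 x₁ 0 t + s * x₁) / t ≤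
          ((t - s) * yminus u0 x' 0 t + s * x') / t + ε := by
        have hnum : (t - s) * yminus u0 x₁ 0 t + s * x₁ ≤
            (t - s) * yminus u0 x' 0 t + s * x' + ε * t := by
          nlinarith [mul_le_mul_of_nonneg_left hyy hts.le]
        calc ((t - s) * yminus u0 x₁ 0 t + s * x₁) / t
            ≤ ((t - s) * yminus u0 x' 0 t + s * x' + ε * t) / t :=
              (div_le_div_iff_of_pos_right ht).mpr hnum
          _ = ((t - s) * yminus u0 x' 0 t + s * x') / t + ε := by
              rw [add_div, mul_div_assoc]
              rw [div_self ht.ne', mul_one]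
      linarith
    -- upper bound : x₀ ≤ y_s⁺(x₁)
    have hhi : x₀ ≤ ((t - s) * yplus u0 x₁ 0 t + s * x₁) / t := by
      apply le_of_forall_pos_le_add
      intro ε hε
      have hLmem := FC.right_limit hmono hlc hgrowth x₁ t ht
      have hLyp : sInf ((fun x => yminus u0 x 0 t) '' Ioi x₁) ≤ yplus u0 x₁ 0 t :=
        le_csSup (FC.minSet_zero_bddAbove x₁ t) hLmem
      have hSne : ((fun x => yminus u0 x 0 t) '' Ioi x₁).Nonempty :=
        ⟨_, ⟨x₁ + 1, by simp, rfl⟩⟩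
      obtain ⟨v, ⟨x2, hx2, rfl⟩, hv⟩ := exists_lt_of_csInf_lt hSne
        (show sInf ((fun x => yminus u0 x 0 t) '' Ioi x₁) <
            sInf ((fun x => yminus u0 x 0 t) '' Ioi x₁) + ε by linarith)
      set x' := min x2 (x₁ + ε) with hx'
      have hx'1 : x₁ < x' := lt_min hx2 (by linarith)
      have hx'2 : x' ≤ x₁ + ε := min_le_right _ _
      have hyy : yminus u0 x' 0 t ≤ yplus u0 x₁ 0 t + ε := by
        have h1 := FC.yminus_mono hmono hlc hgrowth ht (min_le_left x2 (x₁ + ε))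
        linarith
      have hx'A := hup x' hx'1
      have h1 : x₀ ≤ ((t - s) * yminus u0 x' 0 t + s * x') / t := by
        rw [mem_setOf_eq, hys x'] at hx'A
        exact hx'A
      have hstep : ((t - s) * yminus u0 x' 0 t + s * x') / t ≤
          ((t - s) * yplus u0 x₁ 0 t + s * x₁) / t + ε := by
        have hnum : (t - s) * yminus u0 x' 0 t + s * x' ≤
            (t - s) * yplus u0 x₁ 0 t + s * x₁ + ε * t := by
          nlinarith [mul_le_mul_of_nonneg_left hyy hts.le]
        calc ((t - s) * yminus u0 x' 0 t + s * x') / t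
            ≤ ((t - s) * yplus u0 x₁ 0 t + s * x₁ + ε * t) / t :=
              (div_le_div_iff_of_pos_right ht).mpr hnum
          _ = ((t - s) * yplus u0 x₁ 0 t + s * x₁) / t + ε := by
              rw [add_div, mul_div_assoc]
              rw [div_self ht.ne', mul_one]
      linarith
    obtain ⟨hfan1, hfan2⟩ := FC.fan hmono hlc hgrowth hs hst hlo hhi
    exact ⟨hfan1, FC.yminus_le_yplus hmono hlc hgrowth x₀ s hs, hfan2⟩
  · -- converse direction
    rintro ⟨h1, hab, h3⟩
    -- first : x₀ ≤ y_s⁺(x₁)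
    have hqx₀ : x₀ ≤ ((t - s) * yplus u0 x₁ 0 t + s * x₁) / t := by
      by_contra hq
      push_neg at hq
      obtain ⟨hq1, hq2⟩ := FC.forward hmono hlc hgrowth hs hst
        (FC.yplus_mem hmono hlc hgrowth x₁ t ht)
      have hc := FC.cross hmono hlc hgrowth hs hq hq2
        (FC.yminus_mem hmono hlc hgrowth x₀ s hs)
      linarith
    -- membership of x₁ + ε in A
    have hmem' : ∀ ε > (0:ℝ), (x₁ + ε) ∈ {x | x₀ ≤ yminus u0 x s t} := by
      intro ε hε
      apply hmemA
      have hc : yplus u0 x₁ 0 t ≤ yminus u0 (x₁ + ε) 0 t :=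
        FC.cross hmono hlc hgrowth ht (by linarith)
          (FC.yplus_mem hmono hlc hgrowth x₁ t ht)
          (FC.yminus_mem hmono hlc hgrowth (x₁ + ε) t ht)
      refine hqx₀.trans ?_
      apply (div_le_div_iff_of_pos_right ht).mpr
      nlinarith [mul_le_mul_of_nonneg_left hc hts.le]
    have hAne : {x | x₀ ≤ yminus u0 x s t}.Nonempty := ⟨x₁ + 1, hmem' 1 one_pos⟩
    rw [hwdef]
    apply le_antisymm
    · -- x₁ ≤ sInf A
      apply le_csInf hAne
      intro x hx
      by_contra hxx
      push_neg at hxx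
      have hxA : x₀ ≤ ((t - s) * yminus u0 x 0 t + s * x) / t := by
        rw [mem_setOf_eq, hys x] at hx
        exact hx
      obtain ⟨hm1, hm2⟩ := FC.forward hmono hlc hgrowth hs hst
        (FC.yminus_mem hmono hlc hgrowth x t ht)
      rcases eq_or_lt_of_le hxA with heq | hlt
      · -- x₀ equals the intermediate point : contradiction with the shock
        rw [← heq] at hm1
        have hba := FC.backward hmono hlc hgrowth hs hst hm1
          (FC.yminus_mem hmono hlc hgrowth x₀ s hs)
        have hbb := FC.backward hmono hlc hgrowth hs hst hm1
          (FC.yplus_mem hmono hlc hgrowth x₀ s hs)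
        have he := hba.2.symm.trans hbb.2
        rw [div_eq_div_iff ht.ne' ht.ne'] at he
        have : yminus u0 x₀ 0 s = yplus u0 x₀ 0 s := by
          have h' : (t - s) * yminus u0 x₀ 0 s = (t - s) * yplus u0 x₀ 0 s := by
            nlinarith [he]
          exact mul_left_cancel₀ hts.ne' h'
        linarith
      · -- x₀ strictly inside : no-crossing contradiction
        have hc := FC.cross hmono hlc hgrowth hs hlt
          (FC.yplus_mem hmono hlc hgrowth x₀ s hs) hm2
        have hz1 : yminus u0 x 0 t ≤ yminus u0 x₁ 0 t :=
          FC.yminus_mono hmono hlc hgrowth ht hxx.le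
        linarith
    · -- sInf A ≤ x₁
      apply le_of_forall_pos_le_add
      intro ε hε
      exact csInf_le hAbdd (hmem' ε hε)
end

section
/- Given a < b and T > 0, and u0 nondecreasing, left-continuous with u0(y)/y² → 0 as y → -∞, there exists a constant C such that the Hopf-Lax minimizer set satisfies I(x,t) ⊆ [x - C·t^{1/2}, x] for all x ∈ [a,b] and t ∈ (0,T]. -/
open Set Filter MeasureTheory
open scoped NNReal ENNReal

/-- auxiliary arithmetic fact -/
lemma aux_contra (A r s : ℝ) (hA : 0 ≤ A) (hr : 0 ≤ r)
    (hs : 4 * A + 2 * r + 1 ≤ s) (h : (s - A) ^ 2 ≤ r ^ 2 + s ^ 2 / 4) : False := by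
  nlinarith [mul_nonneg hA hr, sq_nonneg (s - 2*r - 1), sq_nonneg (s - 4*A),
    mul_nonneg (show (0:ℝ) ≤ s by linarith) hA, mul_nonneg (show (0:ℝ) ≤ s by linarith) hr]

/-- Given a < b and T > 0, there is a constant C with
I(x,t) ⊆ [x - C·√t, x] for all x ∈ [a,b] and t ∈ (0,T]. -/
theorem minSet_sqrt_localization
    (u0 : ℝ → ℝ) (hmono : Monotone u0)
    (hlc : ∀ y : ℝ, ContinuousWithinAt u0 (Iic y) y)
    (hgrowth : Tendsto (fun y => u0 y / y ^ 2) atBot (nhds 0))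
    (a b T : ℝ) (hab : a < b) (hT : 0 < T) :
    ∃ C : ℝ, ∀ x ∈ Icc a b, ∀ t ∈ Ioc (0:ℝ) T,
      minSet u0 x 0 t ⊆ Icc (x - C * Real.sqrt t) x := by
  have hε : (0:ℝ) < 1 / (16 * T) := by positivity
  have h1 : ∀ᶠ y in atBot, |u0 y / y ^ 2 - 0| < 1 / (16 * T) :=
    (Metric.tendsto_nhds.mp hgrowth _ hε).mono (fun y hy => by rwa [Real.dist_eq] at hy)
  obtain ⟨M0, hM0⟩ := eventually_atBot.mp h1
  set M : ℝ := min M0 (-1) with hMdef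
  have hMneg : M ≤ -1 := min_le_right _ _
  have hMbound : ∀ y ≤ M, -(y ^ 2) / (16 * T) ≤ u0 y := by
    intro y hy
    have hy0 : y ≤ -1 := hy.trans hMneg
    have hy2 : (0:ℝ) < y ^ 2 := by nlinarith
    have := hM0 y (hy.trans (min_le_left _ _))
    rw [sub_zero, abs_lt] at this
    have h2 : -(1 / (16 * T)) * y ^ 2 ≤ u0 y := by
      have h := this.1
      rw [lt_div_iff₀ hy2] at h
      linarith
    calc -(y ^ 2) / (16 * T) = -(1 / (16 * T)) * y ^ 2 := by ring
      _ ≤ u0 y := h2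
  -- constants
  set K : ℝ := max (u0 b) 0 with hKdef
  have hK0 : 0 ≤ K := le_max_right _ _
  set r : ℝ := Real.sqrt (4 * T * K) with hrdef
  have hr0 : 0 ≤ r := Real.sqrt_nonneg _
  have hr2 : r ^ 2 = 4 * T * K := Real.sq_sqrt (by positivity)
  set R : ℝ := max (-M) (4 * |a| + 2 * r + 1) with hRdef
  have hRM : -R ≤ M := by
    have := le_max_left (-M) (4 * |a| + 2 * r + 1)
    linarith
  have hR1 : 4 * |a| + 2 * r + 1 ≤ R := le_max_right _ _
  set C : ℝ := Real.sqrt (4 * max (u0 b - u0 (-R)) 0) with hCdef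
  have hC0 : 0 ≤ C := Real.sqrt_nonneg _
  have hC2 : C ^ 2 = 4 * max (u0 b - u0 (-R)) 0 := Real.sq_sqrt (by positivity)
  refine ⟨C, ?_⟩
  rintro x ⟨hax, hxb⟩ t ⟨ht0, htT⟩ y ⟨hyx, hy⟩
  have ht0' : t ≠ 0 := ne_of_gt ht0
  -- rewrite the minimizer identity
  rw [sub_zero] at hy
  have hy0 : hopfLax u0 y 0 = u0 y := by simp [hopfLax]
  rw [hy0] at hy
  have hxt : hopfLax u0 x t = sInf ((fun y => u0 y + (x - y) ^ 2 / (4 * t)) '' Iic x) := by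
    simp [hopfLax, ht0']
  -- BddBelow
  have hbdd : BddBelow ((fun y => u0 y + (x - y) ^ 2 / (4 * t)) '' Iic x) := by
    refine ⟨min (u0 M) (-(x ^ 2) / (4 * T)), ?_⟩
    rintro _ ⟨z, hz, rfl⟩
    rcases le_or_gt z M with hzM | hzM
    · have h1 : -(z ^ 2) / (16 * T) ≤ u0 z := hMbound z hzM
      have h2 : (x - z) ^ 2 / (4 * T) ≤ (x - z) ^ 2 / (4 * t) := by
        apply div_le_div_of_nonneg_left (sq_nonneg _) (by positivity)
        linarith
      have h3 : -(x ^ 2) / (4 * T) ≤ -(z ^ 2) / (16 * T) + (x - z) ^ 2 / (4 * T) := by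
        rw [div_add_div _ _ (by positivity : (16:ℝ) * T ≠ 0) (by positivity : (4:ℝ) * T ≠ 0),
          div_le_div_iff₀ (by positivity) (by positivity)]
        nlinarith [sq_nonneg (2 * x - z), sq_nonneg z, sq_nonneg T]
      have : -(x ^ 2) / (4 * T) ≤ u0 z + (x - z) ^ 2 / (4 * t) := by linarith
      exact le_trans (min_le_right _ _) this
    · have h1 : u0 M ≤ u0 z := hmono hzM.le
      have h2 : (0:ℝ) ≤ (x - z) ^ 2 / (4 * t) := by positivity
      exact le_trans (min_le_left _ _) (by linarith)
  -- key inequality: value ≤ u0 x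
  have hmem : u0 x ∈ (fun y => u0 y + (x - y) ^ 2 / (4 * t)) '' Iic x :=
    ⟨x, mem_Iic.mpr le_rfl, by simp⟩
  have hkey : u0 y + (x - y) ^ 2 / (4 * t) ≤ u0 x := by
    rw [← hy, hxt]; exact csInf_le hbdd hmem
  have hsq : (x - y) ^ 2 ≤ 4 * t * (u0 x - u0 y) := by
    have h := hkey
    have : (x - y) ^ 2 / (4 * t) ≤ u0 x - u0 y := by linarith
    rw [div_le_iff₀ (by positivity)] at this
    linarith
  -- step 1: y ≥ -R
  have hyR : -R ≤ y := by
    by_contra hc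
    push_neg at hc
    have hyM : y ≤ M := hc.le.trans hRM
    have hu0y : -(y ^ 2) / (16 * T) ≤ u0 y := hMbound y hyM
    have hya : y ≤ a := by
      have h1 : 0 ≤ |a| := abs_nonneg a
      have h2 : -a ≤ |a| := neg_le_abs a
      nlinarith
    have hu0xb : u0 x ≤ u0 b := hmono hxb
    have huxy : 0 ≤ u0 x - u0 y := sub_nonneg.mpr (hmono hyx)
    have hsq2 : (x - y) ^ 2 ≤ 4 * T * (u0 b - u0 y) := by
      have e1 : 4 * t * (u0 x - u0 y) ≤ 4 * T * (u0 x - u0 y) :=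
        mul_le_mul_of_nonneg_right (by linarith) huxy
      have e2 : 4 * T * (u0 x - u0 y) ≤ 4 * T * (u0 b - u0 y) :=
        mul_le_mul_of_nonneg_left (by linarith) (by positivity)
      linarith
    have hax' : (a - y) ^ 2 ≤ (x - y) ^ 2 :=
      pow_le_pow_left₀ (by linarith) (by linarith) 2
    have hub : u0 b ≤ K := le_max_left _ _
    have hfinal : (a - y) ^ 2 ≤ 4 * T * K + y ^ 2 / 4 := by
      rw [neg_div] at hu0y
      have e0 : u0 b - u0 y ≤ K + y ^ 2 / (16 * T) := by linarith
      have e1 : 4 * T * (u0 b - u0 y) ≤ 4 * T * (K + y ^ 2 / (16 * T)) :=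
        mul_le_mul_of_nonneg_left e0 (by positivity)
      have e2 : 4 * T * (K + y ^ 2 / (16 * T)) = 4 * T * K + y ^ 2 / 4 := by
        field_simp
        ring
      linarith
    have habs1 : a ≤ |a| := le_abs_self a
    have habs2 : -a ≤ |a| := neg_le_abs a
    have hs : 4 * |a| + 2 * r + 1 ≤ -y := by linarith
    have h1 : (-y - |a|) ^ 2 ≤ (a - y) ^ 2 :=
      pow_le_pow_left₀ (by linarith [abs_nonneg a]) (by linarith) 2
    have hE : y ^ 2 = (-y) ^ 2 := by ring
    have h2 : (-y - |a|) ^ 2 ≤ r ^ 2 + (-y) ^ 2 / 4 := by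
      rw [hr2]; linarith
    exact aux_contra |a| r (-y) (abs_nonneg a) hr0 hs h2
  -- step 2: final bound
  have hu0y' : u0 (-R) ≤ u0 y := hmono hyR
  have hsq3 : (x - y) ^ 2 ≤ t * C ^ 2 := by
    rw [hC2]
    have h1 : u0 x - u0 y ≤ u0 b - u0 (-R) := by
      have := hmono hxb; linarith
    have h2 : u0 b - u0 (-R) ≤ max (u0 b - u0 (-R)) 0 := le_max_left _ _
    have e : 4 * t * (u0 x - u0 y) ≤ 4 * t * max (u0 b - u0 (-R)) 0 :=
      mul_le_mul_of_nonneg_left (h1.trans h2) (by positivity)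
    linarith [hsq, e]
  have hxy0 : 0 ≤ x - y := sub_nonneg.mpr hyx
  have hfin : x - y ≤ C * Real.sqrt t := by
    have h1 : Real.sqrt ((x - y) ^ 2) ≤ Real.sqrt (t * C ^ 2) := Real.sqrt_le_sqrt hsq3
    rw [Real.sqrt_sq hxy0] at h1
    have h2 : Real.sqrt (t * C ^ 2) = Real.sqrt t * C := by
      rw [Real.sqrt_mul ht0.le, Real.sqrt_sq hC0]
    rw [h2] at h1
    linarith [h1, mul_comm C (Real.sqrt t)]
  exact ⟨by linarith, hyx⟩
end
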